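/- arXiv:1805.08181 — 7 statements merged into one kernel-verified Lean document; each statement's English description precedes it below -/
import Mathlib

section
/- Let K be a field and let d, n be positive integers. Let M₁, …, M_m be d×n matrices over K, each of rank d, and let a₁, …, a_m be integers. Then the function ∑_{j=1}^m aⱼ·1_{P_{Mⱼ}} : ℝⁿ → ℤ is identically zero if and only if the function ∑_{j=1}^m aⱼ·1_{I_{Mⱼ}} : ℝⁿ → ℤ is identically zero, where 1_S denotes the indicator function of a subset S ⊆ ℝⁿ. -/
/-!
The hyperplane `∑ xᵢ = d` cuts `I_M` in `P_M`, so a relation among the `1_{I_{Mⱼ}}` restricts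
to one among the `1_{P_{Mⱼ}}`.

Conversely, fix `x ≥ 0` and cut everything with the orthant `x + ℝⁿ_{≥0}`. The relation among
the `1_{P_{Mⱼ}}` becomes one among the compact convex sets `Qⱼ = P_{Mⱼ} ∩ (x + ℝⁿ_{≥0})`, and
the Euler characteristic, which is well defined on such relations (induct on the dimension:
apply the one-dimensional case to the fibres of the projection forgetting a coordinate), turns
it into `∑_{Qⱼ ≠ ∅} aⱼ = 0`. Finally `Qⱼ ≠ ∅` iff `x ∈ I_{Mⱼ}`: since the rank function is
submodular, greedily raising the coordinates of a point of `I_{Mⱼ}` makes every coordinate lie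
in a tight set, hence makes the whole ground set tight, i.e. reaches `∑ yᵢ = rank Mⱼ = d`.
-/

noncomputable section

/-- The rank of the submatrix of `M` formed by the columns indexed by `A`. -/
def colRank {K : Type*} [Field K] {d n : ℕ} (M : Matrix (Fin d) (Fin n) K)
    (A : Finset (Fin n)) : ℕ :=
  (M.submatrix id ((↑) : A → Fin n)).rank

/-- The rank polytope `P_M ⊆ ℝⁿ` of a `d × n` matrix `M`. -/
def rankPolytope {K : Type*} [Field K] {d n : ℕ} (M : Matrix (Fin d) (Fin n) K) :
    Set (Fin n → ℝ) :=
  {x | (∀ i, 0 ≤ x i ∧ x i ≤ 1) ∧ (∑ i, x i = d) ∧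
    ∀ A : Finset (Fin n), ∑ i ∈ A, x i ≤ colRank M A}

/-- The independence polytope `I_M ⊆ ℝⁿ` of a `d × n` matrix `M`. -/
def indepPolytope {K : Type*} [Field K] {d n : ℕ} (M : Matrix (Fin d) (Fin n) K) :
    Set (Fin n → ℝ) :=
  {x | (∀ i, 0 ≤ x i) ∧ ∀ A : Finset (Fin n), ∑ i ∈ A, x i ≤ colRank M A}

open Finset Filter Topology
open scoped Classical

def IndicatorRelation {α ι : Type*} [Fintype ι] (a : ι → ℤ) (Q : ι → Set α) : Prop :=
  ∀ x, ∑ j, a j * (Q j).indicator (fun _ => (1 : ℤ)) x = 0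

namespace IndicatorRelation

variable {α β ι : Type*} [Fintype ι] {a : ι → ℤ} {Q : ι → Set α}

theorem iff_forall_sum_filter_mem :
    IndicatorRelation a Q ↔ ∀ x, ∑ j with x ∈ Q j, a j = 0 := by
  simp [IndicatorRelation, Set.indicator_apply, sum_filter]

theorem preimage (h : IndicatorRelation a Q) (f : β → α) :
    IndicatorRelation a (fun j => f ⁻¹' Q j) :=
  fun x => h (f x)

theorem inter (h : IndicatorRelation a Q) (S : Set α) :
    IndicatorRelation a (fun j => S ∩ Q j) := by
  rw [iff_forall_sum_filter_mem] at h ⊢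
  intro x
  by_cases hx : x ∈ S
  · simpa [hx] using h x
  · simp [hx]

end IndicatorRelation

theorem eventually_mem_Icc_iff_mem_Ico {α : Type*} [LinearOrder α] [TopologicalSpace α]
    [OrderTopology α] (l u t : α) : ∀ᶠ r in 𝓝[>] t, r ∈ Set.Icc l u ↔ t ∈ Set.Ico l u := by
  rcases lt_or_ge t l with htl | hlt
  · filter_upwards [Ioo_mem_nhdsGT htl] with r hr
    simp only [Set.mem_Icc, Set.mem_Ico, Set.mem_Ioo] at hr ⊢
    constructor <;> intro h <;> exact absurd h.1 (by order)
  rcases lt_or_ge t u with htu | hut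
  · filter_upwards [Ioo_mem_nhdsGT htu] with r hr
    simp only [Set.mem_Icc, Set.mem_Ico, Set.mem_Ioo] at hr ⊢
    exact ⟨fun _ => ⟨hlt, htu⟩, fun _ => ⟨by order, hr.2.le⟩⟩
  · filter_upwards [self_mem_nhdsWithin] with r (hr : t < r)
    simp only [Set.mem_Icc, Set.mem_Ico]
    constructor <;> intro h <;> exact absurd h.2 (by order)

theorem IsCompact.eventually_mem_iff_ne_sSup {Q : Set ℝ} (hc : IsCompact Q) (hv : Convex ℝ Q)
    (t : ℝ) : ∀ᶠ r in 𝓝[>] t, r ∈ Q ↔ t ∈ Q ∧ t ≠ sSup Q := by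
  rcases Q.eq_empty_or_nonempty with rfl | hne
  · simp
  obtain ⟨l, u, hlu, rfl⟩ : ∃ l u, l ≤ u ∧ Q = Set.Icc l u :=
    ⟨_, _, csInf_le_csSup hne hc.bddBelow hc.bddAbove,
      eq_Icc_of_connected_compact (hv.isConnected hne) hc⟩
  filter_upwards [eventually_mem_Icc_iff_mem_Ico l u t] with r hr
  rw [hr, csSup_Icc hlu, ← Set.Icc_sdiff_right]
  rfl

namespace IndicatorRelation

variable {ι : Type*} [Fintype ι] {a : ι → ℤ}

theorem sum_nonempty_eq_zero_of_real {Q : ι → Set ℝ} (hc : ∀ j, IsCompact (Q j))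
    (hv : ∀ j, Convex ℝ (Q j)) (h : IndicatorRelation a Q) :
    ∑ j with (Q j).Nonempty, a j = 0 := by
  rw [iff_forall_sum_filter_mem] at h
  have h_right : ∀ t, ∑ j with t ∈ Q j ∧ t ≠ sSup (Q j), a j = 0 := by
    intro t
    obtain ⟨r, hr⟩ :=
      (eventually_all.2 fun j => (hc j).eventually_mem_iff_ne_sSup (hv j) t).exists
    simpa only [hr] using h r
  -- just right of `t`, exactly the sets whose right end is `t` drop out of the relation
  have h_top : ∀ t, ∑ j with (Q j).Nonempty ∧ sSup (Q j) = t, a j = 0 := by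
    intro t
    have h_split := sum_filter_add_sum_filter_not {j | t ∈ Q j} (fun j => t ≠ sSup (Q j)) a
    rw [filter_filter, filter_filter, h_right t, h t, zero_add] at h_split
    rw [← h_split]
    refine sum_congr (filter_congr fun j _ => ?_) fun _ _ => rfl
    constructor
    · rintro ⟨hne, rfl⟩
      exact ⟨(hc j).sSup_mem hne, not_not.2 rfl⟩
    · rintro ⟨ht, hsup⟩
      exact ⟨⟨t, ht⟩, (not_not.1 hsup).symm⟩
  rw [← sum_fiberwise_of_maps_to (g := fun j => sSup (Q j))
    (fun j hj => mem_image_of_mem (fun j => sSup (Q j)) hj)]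
  refine sum_eq_zero fun t _ => ?_
  rw [filter_filter]
  exact h_top t

theorem image_snd {E : Type*} [AddCommGroup E] [Module ℝ E] [TopologicalSpace E] [T2Space E]
    {Q : ι → Set (ℝ × E)} (hc : ∀ j, IsCompact (Q j)) (hv : ∀ j, Convex ℝ (Q j))
    (h : IndicatorRelation a Q) : IndicatorRelation a (fun j => Prod.snd '' Q j) := by
  rw [iff_forall_sum_filter_mem]
  intro y
  let fiber : ℝ →ᵃ[ℝ] ℝ × E := (AffineMap.id ℝ ℝ).prod (AffineMap.const ℝ ℝ y)
  have hfc : ∀ j, IsCompact (fiber ⁻¹' Q j) := fun j =>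
    ((hc j).image continuous_fst).of_isClosed_subset
      ((hc j).isClosed.preimage (continuous_id.prodMk continuous_const)) fun t ht => ⟨_, ht, rfl⟩
  have hfv : ∀ j, Convex ℝ (fiber ⁻¹' Q j) := fun j => (hv j).affine_preimage fiber
  rw [← sum_nonempty_eq_zero_of_real hfc hfv (h.preimage fiber)]
  refine sum_congr (filter_congr fun j _ => ?_) fun _ _ => rfl
  constructor
  · rintro ⟨⟨t, y'⟩, hq, rfl⟩
    exact ⟨t, hq⟩
  · rintro ⟨t, ht⟩
    exact ⟨(t, y), ht, rfl⟩

theorem sum_nonempty_eq_zero {k : ℕ} {Q : ι → Set (Fin k → ℝ)} (hc : ∀ j, IsCompact (Q j))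
    (hv : ∀ j, Convex ℝ (Q j)) (h : IndicatorRelation a Q) :
    ∑ j with (Q j).Nonempty, a j = 0 := by
  induction k with
  | zero =>
    rw [← (iff_forall_sum_filter_mem.1 h) default]
    refine sum_congr (filter_congr fun j _ => ?_) fun _ _ => rfl
    exact ⟨fun ⟨x, hx⟩ => Subsingleton.elim x default ▸ hx, fun hx => ⟨_, hx⟩⟩
  | succ k ih =>
    let e := Fin.consEquivL ℝ (fun _ : Fin (k + 1) => ℝ)
    let Q' := fun j => Prod.snd '' (e ⁻¹' Q j)
    have hc' : ∀ j, IsCompact (e ⁻¹' Q j) := fun j => e.toHomeomorph.isCompact_preimage.2 (hc j)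
    have hv' : ∀ j, Convex ℝ (e ⁻¹' Q j) := fun j => (hv j).linear_preimage e.toLinearMap
    have h_proj : IndicatorRelation a Q' := (h.preimage e).image_snd hc' hv'
    rw [← ih (fun j => (hc' j).image continuous_snd)
      (fun j => (hv' j).linear_image (LinearMap.snd ℝ ℝ _)) h_proj]
    refine sum_congr (filter_congr fun j _ => ?_) fun _ _ => rfl
    rw [Set.image_nonempty, e.surjective.nonempty_preimage]

end IndicatorRelation

section Polymatroid

variable {ι : Type*} (r : Finset ι → ℝ)

def RankBounded (x : ι → ℝ) : Prop :=
  ∀ A, ∑ i ∈ A, x i ≤ r A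

variable {r} {x : ι → ℝ}

theorem RankBounded.sum_eq_of_le {y : ι → ℝ} (hy : RankBounded r y) (hxy : x ≤ y)
    {A : Finset ι} (hA : ∑ i ∈ A, x i = r A) : ∑ i ∈ A, y i = r A :=
  (hy A).antisymm (hA ▸ sum_le_sum fun i _ => hxy i)

variable [DecidableEq ι]

theorem RankBounded.sum_union_eq (hr : ∀ A B, r (A ∪ B) + r (A ∩ B) ≤ r A + r B)
    {y : ι → ℝ} (hy : RankBounded r y) {A B : Finset ι} (hA : ∑ i ∈ A, y i = r A)
    (hB : ∑ i ∈ B, y i = r B) : ∑ i ∈ A ∪ B, y i = r (A ∪ B) := by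
  have h_incl_excl := sum_union_inter (s₁ := A) (s₂ := B) (f := y)
  linarith [hy (A ∪ B), hy (A ∩ B), hr A B]

-- Raise `xᵢ` by the least slack of the constraints through `i`: that constraint becomes tight.
theorem RankBounded.exists_le_sum_eq [Fintype ι] (hx : RankBounded r x) (i : ι) :
    ∃ y, x ≤ y ∧ RankBounded r y ∧ ∃ A, i ∈ A ∧ ∑ k ∈ A, y k = r A := by
  have hne : ({A | i ∈ A} : Finset (Finset ι)).Nonempty := ⟨univ, by simp⟩
  set δ := ({A | i ∈ A} : Finset (Finset ι)).inf' hne (fun A => r A - ∑ k ∈ A, x k)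
  have hδ_le : ∀ A, i ∈ A → δ ≤ r A - ∑ k ∈ A, x k := fun A hA => inf'_le _ (by simpa)
  have hδ : 0 ≤ δ := le_inf' _ _ fun A _ => sub_nonneg.2 (hx A)
  have h_sum : ∀ A, ∑ k ∈ A, (x + Pi.single i δ : ι → ℝ) k =
      ∑ k ∈ A, x k + if i ∈ A then δ else 0 := fun A => by
    rw [← sum_pi_single' i δ A, ← sum_add_distrib]
    rfl
  obtain ⟨A, hA, hδA⟩ := exists_mem_eq_inf' hne (fun A => r A - ∑ k ∈ A, x k)
  refine ⟨x + Pi.single i δ, le_add_of_nonneg_right (Pi.single_nonneg.2 hδ), fun B => ?_,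
    A, by simpa using hA, ?_⟩
  · rw [h_sum]
    split_ifs with hiB
    · linarith [hδ_le B hiB]
    · simpa using hx B
  · rw [h_sum, if_pos (by simpa using hA)]
    linarith

theorem RankBounded.exists_le_forall_mem_sum_eq [Fintype ι] (hx : RankBounded r x) :
    ∃ y, x ≤ y ∧ RankBounded r y ∧ ∀ i, ∃ A, i ∈ A ∧ ∑ k ∈ A, y k = r A := by
  suffices ∀ T : Finset ι, ∃ y, x ≤ y ∧ RankBounded r y ∧
      ∀ i ∈ T, ∃ A, i ∈ A ∧ ∑ k ∈ A, y k = r A by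
    obtain ⟨y, hxy, hy, htight⟩ := this univ
    exact ⟨y, hxy, hy, fun i => htight i (mem_univ i)⟩
  intro T
  induction T using Finset.induction with
  | empty => exact ⟨x, le_rfl, hx, by simp⟩
  | insert i T _ ih =>
    obtain ⟨y, hxy, hy, htight⟩ := ih
    obtain ⟨z, hyz, hz, A, hiA, hA⟩ := hy.exists_le_sum_eq i
    refine ⟨z, hxy.trans hyz, hz, fun k hk => ?_⟩
    rcases mem_insert.1 hk with rfl | hkT
    · exact ⟨A, hiA, hA⟩
    · obtain ⟨B, hkB, hB⟩ := htight k hkT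
      exact ⟨B, hkB, hz.sum_eq_of_le hyz hB⟩

theorem RankBounded.exists_le_sum_univ_eq [Fintype ι] (hr₀ : r ∅ = 0)
    (hr : ∀ A B, r (A ∪ B) + r (A ∩ B) ≤ r A + r B) (hx : RankBounded r x) :
    ∃ y, x ≤ y ∧ RankBounded r y ∧ ∑ i, y i = r univ := by
  obtain ⟨y, hxy, hy, htight⟩ := hx.exists_le_forall_mem_sum_eq
  choose A hiA hA using htight
  have h_cover : univ.sup A = univ := eq_univ_of_forall fun i => mem_sup.2 ⟨i, mem_univ i, hiA i⟩
  refine ⟨y, hxy, hy, h_cover ▸ sup_induction (p := fun B => ∑ i ∈ B, y i = r B)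
    (by simpa using hr₀.symm) (fun B hB C hC => hy.sum_union_eq hr hB hC) fun i _ => hA i⟩

end Polymatroid

section ColRank

variable {K : Type*} [Field K] {d n : ℕ} (M : Matrix (Fin d) (Fin n) K)

theorem colRank_eq_finrank_span (A : Finset (Fin n)) :
    colRank M A = Module.finrank K (Submodule.span K (M.col '' A)) := by
  rw [colRank, Matrix.rank_eq_finrank_span_cols, Set.image_eq_range]
  rfl

theorem colRank_univ : colRank M univ = M.rank := by
  rw [colRank_eq_finrank_span, coe_univ, Set.image_univ, Matrix.rank_eq_finrank_span_cols]

theorem colRank_empty : colRank M ∅ = 0 := by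
  simp [colRank_eq_finrank_span]

theorem colRank_singleton_le (i : Fin n) : colRank M {i} ≤ 1 := by
  simpa [colRank] using
    Matrix.rank_le_card_width (M.submatrix id ((↑) : ({i} : Finset (Fin n)) → Fin n))

theorem colRank_union_add_colRank_inter_le (A B : Finset (Fin n)) :
    colRank M (A ∪ B) + colRank M (A ∩ B) ≤ colRank M A + colRank M B := by
  simp only [colRank_eq_finrank_span]
  have h_union : Submodule.span K (M.col '' ↑(A ∪ B)) =
      Submodule.span K (M.col '' A) ⊔ Submodule.span K (M.col '' B) := by
    rw [coe_union, Set.image_union, Submodule.span_union]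
  have h_inter : Submodule.span K (M.col '' ↑(A ∩ B)) ≤
      Submodule.span K (M.col '' A) ⊓ Submodule.span K (M.col '' B) :=
    le_inf (Submodule.span_mono (Set.image_mono inter_subset_left))
      (Submodule.span_mono (Set.image_mono inter_subset_right))
  rw [h_union, ← Submodule.finrank_sup_add_finrank_inf_eq (Submodule.span K (M.col '' A))]
  exact Nat.add_le_add_left (Submodule.finrank_mono h_inter) _

end ColRank

section Polytopes

variable {K : Type*} [Field K] {d n : ℕ} (M : Matrix (Fin d) (Fin n) K)

theorem isLinearMap_sum_apply {ι : Type*} (A : Finset ι) :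
    IsLinearMap ℝ (fun x : ι → ℝ => ∑ i ∈ A, x i) :=
  ⟨fun _ _ => sum_add_distrib, fun c x => (mul_sum A x c).symm⟩

theorem indepPolytope_eq_inter_iInter :
    indepPolytope M = Set.Ici 0 ∩ ⋂ A, {x | ∑ i ∈ A, x i ≤ (colRank M A : ℝ)} := by
  ext x
  simp [indepPolytope, Pi.le_def]

theorem indepPolytope_subset_Icc : indepPolytope M ⊆ Set.Icc 0 1 := fun x hx =>
  ⟨hx.1, fun i => by
    simpa using (hx.2 {i}).trans (Nat.cast_le.2 (colRank_singleton_le M i))⟩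

theorem rankPolytope_eq_inter : rankPolytope M = {x | ∑ i, x i = (d : ℝ)} ∩ indepPolytope M := by
  ext x
  constructor
  · rintro ⟨hx01, hsum, hA⟩
    exact ⟨hsum, fun i => (hx01 i).1, hA⟩
  · rintro ⟨hsum, hx⟩
    exact ⟨fun i => ⟨hx.1 i, (indepPolytope_subset_Icc M hx).2 i⟩, hsum, hx.2⟩

theorem isCompact_rankPolytope : IsCompact (rankPolytope M) := by
  have h_closed : IsClosed (indepPolytope M) := by
    rw [indepPolytope_eq_inter_iInter]
    exact isClosed_Ici.inter (isClosed_iInter fun A => isClosed_le (by fun_prop) (by fun_prop))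
  rw [rankPolytope_eq_inter]
  exact isCompact_Icc.of_isClosed_subset ((isClosed_eq (by fun_prop) (by fun_prop)).inter h_closed)
    (Set.inter_subset_right.trans (indepPolytope_subset_Icc M))

theorem convex_rankPolytope : Convex ℝ (rankPolytope M) := by
  rw [rankPolytope_eq_inter, indepPolytope_eq_inter_iInter]
  exact (convex_hyperplane (isLinearMap_sum_apply univ) _).inter ((convex_Ici 0).inter
    (convex_iInter fun A => convex_halfSpace_le (isLinearMap_sum_apply A) _))

theorem Ici_inter_rankPolytope_nonempty_iff (hM : M.rank = d) {x : Fin n → ℝ} (hx : 0 ≤ x) :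
    (Set.Ici x ∩ rankPolytope M).Nonempty ↔ x ∈ indepPolytope M := by
  rw [rankPolytope_eq_inter]
  constructor
  · rintro ⟨y, hxy, -, hy⟩
    exact ⟨hx, fun A => (sum_le_sum fun i _ => hxy i).trans (hy.2 A)⟩
  · intro hxI
    obtain ⟨y, hxy, hy, hsum⟩ :=
      RankBounded.exists_le_sum_univ_eq (r := fun A => (colRank M A : ℝ))
        (by simp [colRank_empty])
        (fun A B => by exact_mod_cast colRank_union_add_colRank_inter_le M A B) hxI.2
    rw [colRank_univ, hM] at hsum
    exact ⟨y, hxy, hsum, fun i => (hx i).trans (hxy i), hy⟩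

end Polytopes

theorem rank_indicator_rel_iff_indep_indicator_rel_general
    {K : Type*} [Field K] {d n m : ℕ}
    (M : Fin m → Matrix (Fin d) (Fin n) K) (hM : ∀ j, (M j).rank = d)
    (a : Fin m → ℤ) :
    (∀ x : Fin n → ℝ,
        ∑ j, a j * (rankPolytope (M j)).indicator (fun _ => (1 : ℤ)) x = 0) ↔
      (∀ x : Fin n → ℝ,
        ∑ j, a j * (indepPolytope (M j)).indicator (fun _ => (1 : ℤ)) x = 0) := by
  change IndicatorRelation a (fun j => rankPolytope (M j)) ↔
    IndicatorRelation a (fun j => indepPolytope (M j))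
  refine ⟨fun hP => IndicatorRelation.iff_forall_sum_filter_mem.2 fun x => ?_, fun hI => ?_⟩
  · by_cases hx : 0 ≤ x
    · rw [← (hP.inter (Set.Ici x)).sum_nonempty_eq_zero
        (fun j => (isCompact_rankPolytope (M j)).inter_left isClosed_Ici)
        (fun j => (convex_Ici x).inter (convex_rankPolytope (M j)))]
      simp_rw [Ici_inter_rankPolytope_nonempty_iff _ (hM _) hx]
    · exact sum_eq_zero fun j hj => absurd (mem_filter.1 hj).2.1 hx
  · simpa only [rankPolytope_eq_inter] using hI.inter {x | ∑ i, x i = (d : ℝ)}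

/-- For `d × n` matrices `M₁, …, M_m` of rank `d`, the integer combination
`∑ aⱼ · 1_{P_{Mⱼ}}` vanishes identically iff `∑ aⱼ · 1_{I_{Mⱼ}}` does. -/
theorem rank_indicator_rel_iff_indep_indicator_rel
    {K : Type*} [Field K] {d n m : ℕ} (hd : 0 < d) (hn : 0 < n)
    (M : Fin m → Matrix (Fin d) (Fin n) K) (hM : ∀ j, (M j).rank = d)
    (a : Fin m → ℤ) :
    (∀ x : Fin n → ℝ,
        ∑ j, a j * (rankPolytope (M j)).indicator (fun _ => (1 : ℤ)) x = 0) ↔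
      (∀ x : Fin n → ℝ,
        ∑ j, a j * (indepPolytope (M j)).indicator (fun _ => (1 : ℤ)) x = 0) :=
  rank_indicator_rel_iff_indep_indicator_rel_general M hM a
end
end

section
/- Let P₁, …, P_m ⊆ ℝⁿ be closed convex polyhedra (each a finite intersection of closed half-spaces), let a₁, …, a_m be integers, and let v ∈ ℝⁿ. If ∑_{j=1}^m aⱼ·1_{Pⱼ} is identically zero as a function ℝⁿ → ℤ, then ∑_{j=1}^m aⱼ·1_{Pⱼ + ℝ_{≥0}v} is identically zero, where Pⱼ + ℝ_{≥0}v denotes the Minkowski sum {p + λv : p ∈ Pⱼ, λ ≥ 0} and 1_S is the indicator function of S. -/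
/-- A closed convex polyhedron in `ℝⁿ`: a finite intersection of closed half-spaces. -/
def IsPolyhedron {n : ℕ} (P : Set (Fin n → ℝ)) : Prop :=
  ∃ (k : ℕ) (f : Fin k → Fin n → ℝ) (c : Fin k → ℝ),
    P = {x | ∀ i, ∑ t, f i t * x t ≤ c i}

/-- Minkowski sum of a set with the ray `ℝ_{≥0} v`. -/
def raySum {n : ℕ} (P : Set (Fin n → ℝ)) (v : Fin n → ℝ) : Set (Fin n → ℝ) :=
  {x | ∃ p ∈ P, ∃ t : ℝ, 0 ≤ t ∧ x = p + t • v}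

/-!
Restrict everything to the line `t ↦ x - t • v`: each polyhedron traces a closed interval
`T ⊆ ℝ`, and `x ∈ P + ℝ≥0 v` iff `T` meets `[0, ∞)`. For a closed interval this happens
iff `0 ∈ T` or `T` has a positive least element, and a least element is exactly a point
where `1_T` jumps up from the left. Both the value at `0` and the left-jumps depend
linearly on `1_T` (near any point, a finite family of intervals is constant on a common
left neighbourhood), so `∑ aⱼ 1_{Tⱼ} = 0` passes to `∑ aⱼ [Tⱼ ∩ [0, ∞) ≠ ∅] = 0`.
-/

open Filter Topology Set Finset

def leftLimitSet (T : Set ℝ) : Set ℝ := {t | ∀ᶠ s in 𝓝[<] t, s ∈ T}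

theorem Set.OrdConnected.eventually_nhdsLT_mem_iff {T : Set ℝ} (hT : T.OrdConnected) (t : ℝ) :
    ∀ᶠ s in 𝓝[<] t, s ∈ T ↔ t ∈ leftLimitSet T := by
  by_cases hfreq : ∃ᶠ s in 𝓝[<] t, s ∈ T
  · have hin : t ∈ leftLimitSet T := by
      obtain ⟨s₀, hs₀T, hs₀t⟩ := (hfreq.and_eventually self_mem_nhdsWithin).exists
      filter_upwards [Ioo_mem_nhdsLT hs₀t] with s hs
      obtain ⟨s₁, hs₁T, hs₁⟩ := (hfreq.and_eventually (Ioo_mem_nhdsLT hs.2)).exists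
      exact hT.out hs₀T hs₁T ⟨hs.1.le, hs₁.1.le⟩
    filter_upwards [hin] with s hs using iff_of_true hs hin
  · have hout : t ∉ leftLimitSet T := fun (hin : ∀ᶠ s in 𝓝[<] t, s ∈ T) =>
      hfreq hin.frequently
    filter_upwards [not_frequently.mp hfreq] with s hs using iff_of_false hs hout

theorem sum_mul_indicator_leftLimitSet_eq_zero {ι : Type*} [Fintype ι] {T : ι → Set ℝ}
    (hT : ∀ j, (T j).OrdConnected) (a : ι → ℤ)
    (h : ∀ s, ∑ j, a j * (T j).indicator 1 s = 0) (t : ℝ) :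
    ∑ j, a j * (leftLimitSet (T j)).indicator 1 t = 0 := by
  obtain ⟨s, hs⟩ := (eventually_all.mpr fun j => (hT j).eventually_nhdsLT_mem_iff t).exists
  rw [← h s]
  refine Finset.sum_congr rfl fun j _ => ?_
  classical
  simp only [Set.indicator_apply, hs j, Pi.one_apply]

open scoped Classical in
theorem IsClosed.indicator_sub_indicator_leftLimitSet {T : Set ℝ} (hc : IsClosed T)
    (ho : T.OrdConnected) (t : ℝ) :
    T.indicator (1 : ℝ → ℤ) t - (leftLimitSet T).indicator 1 t =
      if IsLeast T t then 1 else 0 := by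
  by_cases htT : t ∈ T
  · by_cases hlb : t ∈ lowerBounds T
    · have hout : t ∉ leftLimitSet T := fun (hin : ∀ᶠ s in 𝓝[<] t, s ∈ T) =>
        let ⟨_, hsT, hst⟩ := (hin.and self_mem_nhdsWithin).exists
        (hlb hsT).not_gt hst
      simp [htT, hout, IsLeast, hlb]
    · obtain ⟨s₀, hs₀T, hs₀t⟩ : ∃ s ∈ T, s < t := by simpa [lowerBounds] using hlb
      have hin : t ∈ leftLimitSet T :=
        mem_of_superset (Ioo_mem_nhdsLT hs₀t) fun _ hs =>
          ho.out hs₀T htT (Ioo_subset_Icc_self hs)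
      simp [htT, hin, IsLeast, hlb]
  · have hout : t ∉ leftLimitSet T := fun hin =>
      htT (hc.mem_of_tendsto (tendsto_id.mono_left nhdsWithin_le_nhds) hin)
    simp [htT, hout, IsLeast]

open scoped Classical in
theorem IsClosed.ite_nonempty_inter_Ici_eq {T : Set ℝ} (hc : IsClosed T) (ho : T.OrdConnected)
    {F : Finset ℝ} (hF : ∀ t, 0 < t → IsLeast T t → t ∈ F) (hFpos : ∀ t ∈ F, 0 < t) :
    (if (T ∩ Ici 0).Nonempty then 1 else 0 : ℤ) =
      T.indicator 1 0 + ∑ t ∈ F, if IsLeast T t then 1 else 0 := by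
  by_cases h0 : (0 : ℝ) ∈ T
  · have hF0 : ∀ t ∈ F, ¬ IsLeast T t := fun t ht hl => (hl.2 h0).not_gt (hFpos t ht)
    have hne : (T ∩ Ici 0).Nonempty := ⟨0, h0, self_mem_Ici⟩
    simp [h0, hne, Finset.sum_ite_of_false hF0]
  by_cases hne : (T ∩ Ici 0).Nonempty
  · obtain ⟨⟨hμT, hμ0⟩, hμlb⟩ :=
      (hc.inter isClosed_Ici).isLeast_csInf hne ⟨0, fun _ hs => hs.2⟩
    set μ := sInf (T ∩ Ici 0)
    have hμ : IsLeast T μ := by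
      refine ⟨hμT, fun s hs => ?_⟩
      by_contra! hsμ
      by_cases hs0 : 0 ≤ s
      · exact hsμ.not_ge (hμlb ⟨hs, hs0⟩)
      · exact h0 (ho.out hs hμT ⟨(not_le.mp hs0).le, hμ0⟩)
    have hμpos : 0 < μ := lt_of_le_of_ne hμ0 fun h => h0 (h ▸ hμT)
    have hleast : ∀ t ∈ F, IsLeast T t ↔ μ = t := fun t _ => ⟨hμ.unique, (· ▸ hμ)⟩
    simp [h0, hne, Finset.sum_ite_eq, hF μ hμpos hμ,
      Finset.sum_congr rfl fun t ht => if_congr (hleast t ht) rfl rfl]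
  · have hF0 : ∀ t ∈ F, ¬ IsLeast T t := fun t ht hl => hne ⟨t, hl.1, (hFpos t ht).le⟩
    simp [h0, hne, Finset.sum_ite_of_false hF0]

open scoped Classical in
theorem sum_mul_ite_nonempty_inter_Ici_eq_zero {ι : Type*} [Fintype ι] {T : ι → Set ℝ}
    (hc : ∀ j, IsClosed (T j)) (ho : ∀ j, (T j).OrdConnected) (a : ι → ℤ)
    (h : ∀ s, ∑ j, a j * (T j).indicator 1 s = 0) :
    ∑ j, a j * (if (T j ∩ Ici 0).Nonempty then 1 else 0) = 0 := by
  set F := (Finset.univ.image fun j => sInf (T j)).filter (0 < ·)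
  have hF : ∀ j t, 0 < t → IsLeast (T j) t → t ∈ F := fun j t ht hl =>
    mem_filter.2 ⟨mem_image.2 ⟨j, mem_univ _, hl.csInf_eq⟩, ht⟩
  have hFpos : ∀ t ∈ F, 0 < t := fun t ht => (mem_filter.1 ht).2
  calc ∑ j, a j * (if (T j ∩ Ici 0).Nonempty then 1 else 0)
      = ∑ j, a j * ((T j).indicator 1 0 +
          ∑ t ∈ F, ((T j).indicator 1 t - (leftLimitSet (T j)).indicator 1 t)) := by
        refine Finset.sum_congr rfl fun j _ => ?_
        simp only [(hc j).ite_nonempty_inter_Ici_eq (ho j) (hF j) hFpos,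
          (hc j).indicator_sub_indicator_leftLimitSet (ho j)]
    _ = ∑ j, a j * (T j).indicator 1 0 + ∑ t ∈ F,
          (∑ j, a j * (T j).indicator 1 t - ∑ j, a j * (leftLimitSet (T j)).indicator 1 t) := by
        simp only [mul_add, Finset.mul_sum, mul_sub, Finset.sum_add_distrib, Finset.sum_sub_distrib]
        rw [Finset.sum_comm, Finset.sum_comm (s := Finset.univ)]
    _ = 0 := by simp [h, sum_mul_indicator_leftLimitSet_eq_zero ho a h]

theorem IsPolyhedron.isClosed {n : ℕ} {P : Set (Fin n → ℝ)} (hP : IsPolyhedron P) :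
    IsClosed P := by
  obtain ⟨k, f, c, rfl⟩ := hP
  simp only [Set.ofPred_forall]
  exact isClosed_iInter fun i => isClosed_le (by fun_prop) continuous_const

theorem IsPolyhedron.convex {n : ℕ} {P : Set (Fin n → ℝ)} (hP : IsPolyhedron P) :
    Convex ℝ P := by
  obtain ⟨k, f, c, rfl⟩ := hP
  simp only [Set.ofPred_forall]
  exact convex_iInter fun i => convex_halfSpace_le
    ⟨fun x y => by simp [mul_add, Finset.sum_add_distrib],
     fun r x => by simp [Finset.mul_sum, mul_left_comm]⟩ (c i)

theorem mem_raySum_iff {n : ℕ} {P : Set (Fin n → ℝ)} {v x : Fin n → ℝ} :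
    x ∈ raySum P v ↔ ({t : ℝ | x - t • v ∈ P} ∩ Ici 0).Nonempty := by
  constructor
  · rintro ⟨p, hp, t, ht, rfl⟩
    exact ⟨t, by simpa using hp, ht⟩
  · rintro ⟨t, htP, ht⟩
    exact ⟨x - t • v, htP, t, ht, (sub_add_cancel x (t • v)).symm⟩

/-- Adding a ray to each polyhedron preserves linear relations among indicator functions. -/
theorem indicator_rel_raySum {n m : ℕ} (P : Fin m → Set (Fin n → ℝ))
    (hP : ∀ j, IsPolyhedron (P j)) (a : Fin m → ℤ) (v : Fin n → ℝ)
    (h : ∀ x : Fin n → ℝ, ∑ j, a j * (P j).indicator (fun _ => (1 : ℤ)) x = 0) :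
    ∀ x : Fin n → ℝ, ∑ j, a j * (raySum (P j) v).indicator (fun _ => (1 : ℤ)) x = 0 := by
  classical
  intro x
  let line : ℝ →ᵃ[ℝ] Fin n → ℝ := AffineMap.lineMap x (x - v)
  have hline : ∀ t, line t = x - t • v := fun t => by
    simp [line, AffineMap.lineMap_apply_module', smul_neg, sub_eq_neg_add]
  have key := sum_mul_ite_nonempty_inter_Ici_eq_zero (T := fun j => line ⁻¹' P j)
    (fun j => (hP j).isClosed.preimage line.continuous_of_finiteDimensional)
    (fun j => ((hP j).convex.affine_preimage line).ordConnected) a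
    (fun s => by simpa [Set.indicator_apply, Set.mem_preimage, hline] using h (x - s • v))
  simpa [Set.indicator_apply, Set.preimage, mem_raySum_iff, hline] using key
end

section
/- Let R be a commutative ring, let r ≥ 0 be an integer, and let F ∈ R[X] be a monic polynomial of degree r+1. Working in the polynomial ring R[z][H] (polynomials in H over R[z]), let G be the unique polynomial satisfying (z − H)·G = F(z) − F(H). Then for every polynomial f ∈ R[X] of degree at most r, the coefficient of H^r in the remainder of G·f(H) upon division by the monic polynomial F(H) (division with respect to H over the ring R[z]) equals f(z). -/
/-!
Write `s_k` for the remainder of `G * X ^ k` modulo `P`. Since `X * G = a • G + (P - C b)`,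
`s_(k+1) = a • s_k - b X ^ k` as long as `k < n`: the right side already has degree at most `n`.
Taking `X ^ n`-coefficients gives `a ^ k`, starting from `s_0 = G`, which is monic of degree `n`.
The remainder is linear, so `p ↦ coeff n (G * p mod P)` is evaluation at `a` in degrees `≤ n`;
for `a = z`, `P = F(H)`, `b = F(z)`, evaluating `f(H)` at `H = z` returns `f`.
-/

open Polynomial Finset

namespace Polynomial

theorem nontrivial_of_natDegree_ne_zero {S : Type*} [Semiring S] {p : S[X]}
    (h : p.natDegree ≠ 0) : Nontrivial S :=
  Nontrivial.of_polynomial_ne (p := p) (q := 0) fun hp => h (by rw [hp, natDegree_zero])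

section DividedDifference

variable {S : Type*} [CommRing S] {n : ℕ} {P G : S[X]} {a b : S}
  (hP : P.Monic) (hn : P.natDegree = n + 1) (hG : (X - C a) * G = P - C b)
include hP hn hG

theorem monic_of_X_sub_C_mul_eq : G.Monic := by
  have hPdeg : 0 < P.degree := natDegree_pos_iff_degree_pos.mp (by omega)
  exact (monic_X_sub_C a).of_mul_monic_left (hG ▸ hP.sub_of_left (degree_C_le.trans_lt hPdeg))

theorem natDegree_of_X_sub_C_mul_eq : G.natDegree = n := by
  have := nontrivial_of_natDegree_ne_zero (p := P) (by omega)
  have := (monic_X_sub_C a).natDegree_mul (monic_of_X_sub_C_mul_eq hP hn hG)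
  rw [hG, natDegree_sub_C, hn, natDegree_X_sub_C] at this
  omega

theorem coeff_modByMonic_mul_X_pow {k : ℕ} (hk : k ≤ n) :
    ((G * X ^ k) %ₘ P).coeff n = a ^ k := by
  have := nontrivial_of_natDegree_ne_zero (p := P) (by omega)
  have hPdeg : P.degree = (n + 1 : ℕ) := by rw [degree_eq_natDegree hP.ne_zero, hn]
  induction k with
  | zero =>
    have hGdeg : G.degree < P.degree := by
      rw [hPdeg, degree_eq_natDegree (monic_of_X_sub_C_mul_eq hP hn hG).ne_zero,
        natDegree_of_X_sub_C_mul_eq hP hn hG]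
      exact WithBot.coe_lt_coe.mpr n.lt_succ_self
    rw [pow_zero, mul_one, (modByMonic_eq_self_iff hP).mpr hGdeg, pow_zero,
      ← natDegree_of_X_sub_C_mul_eq hP hn hG]
    exact monic_of_X_sub_C_mul_eq hP hn hG
  | succ k ih =>
    set s := (G * X ^ k) %ₘ P
    have hrem : (G * X ^ (k + 1)) %ₘ P = a • s - C b * X ^ k := by
      refine (div_modByMonic_unique (a • ((G * X ^ k) /ₘ P) + X ^ k) _ hP ⟨?_, ?_⟩).2
      · simp only [smul_eq_C_mul]
        linear_combination C a * modByMonic_add_div (G * X ^ k) P - X ^ k * hG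
      · refine (degree_sub_le _ _).trans_lt (max_lt ?_ ?_)
        · exact (degree_smul_le _ _).trans_lt (degree_modByMonic_lt _ hP)
        · refine (degree_C_mul_X_pow_le _ _).trans_lt ?_
          rw [hPdeg]
          exact_mod_cast (by omega : k < n + 1)
    rw [hrem, coeff_sub, coeff_smul, coeff_C_mul_X_pow, if_neg (by omega), sub_zero,
      ih (by omega), smul_eq_mul, pow_succ']

theorem coeff_modByMonic_mul_eq_eval {p : S[X]} (hp : p.natDegree ≤ n) :
    ((G * p) %ₘ P).coeff n = p.eval a := by
  have hsum : p = ∑ k ∈ range (n + 1), p.coeff k • X ^ k := by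
    conv_lhs => rw [p.as_sum_range' (n + 1) (Nat.lt_succ_of_le hp)]
    simp only [smul_X_eq_monomial]
  calc ((G * p) %ₘ P).coeff n
      = lcoeff S n (modByMonicHom P (G * ∑ k ∈ range (n + 1), p.coeff k • X ^ k)) := by
        rw [← hsum]; rfl
    _ = ∑ k ∈ range (n + 1), p.coeff k * ((G * X ^ k) %ₘ P).coeff n := by
        simp only [mul_sum, mul_smul_comm, map_sum, map_smul, smul_eq_mul]; rfl
    _ = p.eval a := by
        rw [eval_eq_sum_range' (Nat.lt_succ_of_le hp)]
        refine sum_congr rfl fun k hk => ?_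
        rw [coeff_modByMonic_mul_X_pow hP hn hG (Nat.lt_succ_iff.mp (mem_range.mp hk))]

end DividedDifference

end Polynomial

/-- Working in `R[z][H]` (where `z` is the variable of the inner `Polynomial R` and `H`
the outer variable): if `(z − H)·G = F(z) − F(H)` and `f` has degree at most `r`, then
the coefficient of `H^r` in the remainder of `G·f(H)` modulo the monic polynomial `F(H)`
equals `f(z)`, i.e. `f` itself. -/
theorem coeff_modByMonic_divided_difference {R : Type*} [CommRing R] (r : ℕ)
    (F : Polynomial R) (hF : F.Monic) (hFdeg : F.natDegree = r + 1)
    (G : Polynomial (Polynomial R))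
    (hG : (Polynomial.C Polynomial.X - Polynomial.X) * G =
      Polynomial.C F - F.map (Polynomial.C : R →+* Polynomial R))
    (f : Polynomial R) (hf : f.degree ≤ (r : ℕ)) :
    ((G * f.map (Polynomial.C : R →+* Polynomial R)) %ₘ
        (F.map (Polynomial.C : R →+* Polynomial R))).coeff r = f := by
  have := nontrivial_of_natDegree_ne_zero (p := F) (by omega)
  have h := coeff_modByMonic_mul_eq_eval (G := G) (a := X) (b := F) (hF.map C)
    (by rw [hF.natDegree_map, hFdeg]) (by linear_combination -hG)
    (p := f.map C) (natDegree_map_le.trans (natDegree_le_of_degree_le hf))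
  rwa [eval_map, eval₂_C_X] at h
end

section
/- Fix an integer n ≥ 1 and a real number d, and let H = {x ∈ ℝⁿ : x₁+⋯+xₙ = d} with its subspace topology. A strictly positive matroidal cone is a convex cone C ⊆ ℝⁿ generated by n−1 vectors of the form eⱼ − e_{αⱼ} for j = 2, …, n, where each αⱼ satisfies 1 ≤ αⱼ < j. Let (v₁,C₁), …, (v_m,C_m) be pairwise distinct pairs with each vₗ ∈ H and each Cₗ a strictly positive matroidal cone, and let a₁,…,a_m be integers. If the support of the function ∑_{ℓ=1}^m aₗ·1_{vₗ + Cₗ} : H → ℤ has empty interior in H, then a₁ = ⋯ = a_m = 0. -/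
/-!
Each `treeCone α` is cut out of the hyperplane `∑ xᵢ = 0` by the inequalities
`subtreeSum α k x ≥ 0`, one for each subtree of the rooted tree with parent map `α`. The
functional `x ↦ ∑ i • xᵢ` is positive on all these cones at once, so among the translates
with nonzero coefficient pick an apex `v` of minimal weight, and among the cones with apex `v`
a maximal one `C`. Near `v` no translate with another apex is present, and moving from `v`
into `C` in the direction of `separatingPoint`, which lies in another cone `C'` only if
`C ⊆ C'`, leaves every other cone with apex `v`. On the resulting open subset of the
hyperplane the sum of indicators equals the nonzero coefficient of `(v, C)`.
-/

noncomputable section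

/-- The standard basis vector `eᵢ` of `ℝⁿ`. -/
def eVec (n : ℕ) (i : Fin n) : Fin n → ℝ := Pi.single i 1

/-- A strictly positive matroidal cone: the convex cone generated by `n − 1` vectors
`eⱼ − e_{αⱼ}` with `αⱼ < j`, one for each `j ≠ 0` (i.e. `j = 2, …, n` in 1-indexed
notation). -/
def IsStrictlyPositiveMatroidalCone {n : ℕ} (C : Set (Fin n → ℝ)) : Prop :=
  ∃ α : Fin n → Fin n, (∀ j : Fin n, (j : ℕ) ≠ 0 → α j < j) ∧
    C = {x | ∃ c : Fin n → ℝ, (∀ j, 0 ≤ c j) ∧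
      x = ∑ j ∈ Finset.univ.filter (fun j : Fin n => (j : ℕ) ≠ 0),
        c j • (eVec n j - eVec n (α j))}

namespace MatroidalCone

open Finset Filter Topology

variable {n : ℕ}

def IsParentMap (α : Fin n → Fin n) : Prop := ∀ j : Fin n, (j : ℕ) ≠ 0 → α j < j

def nonroot (n : ℕ) : Finset (Fin n) := univ.filter (fun j : Fin n => (j : ℕ) ≠ 0)

def generator (α : Fin n → Fin n) (j : Fin n) : Fin n → ℝ := eVec n j - eVec n (α j)

def treeCone (α : Fin n → Fin n) : Set (Fin n → ℝ) :=
  {x | ∃ c : Fin n → ℝ, (∀ j, 0 ≤ c j) ∧ x = ∑ j ∈ nonroot n, c j • generator α j}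

theorem isStrictlyPositiveMatroidalCone_iff {C : Set (Fin n → ℝ)} :
    IsStrictlyPositiveMatroidalCone C ↔ ∃ α, IsParentMap α ∧ C = treeCone α :=
  Iff.rfl

/-- `IsAncestor α k j`: climbing from `j` along the parent map `α` reaches `k`
(the root `0` has no parent). -/
def IsAncestor (α : Fin n → Fin n) (k j : Fin n) : Prop :=
  Relation.ReflTransGen (fun c p : Fin n => (c : ℕ) ≠ 0 ∧ α c = p) j k

variable {α β : Fin n → Fin n} {j k : Fin n}

theorem IsAncestor.refl (α : Fin n → Fin n) (k : Fin n) : IsAncestor α k k :=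
  Relation.ReflTransGen.refl

theorem IsAncestor.trans {a : Fin n} (hak : IsAncestor α a k) (hkj : IsAncestor α k j) :
    IsAncestor α a j :=
  Relation.ReflTransGen.trans hkj hak

theorem IsAncestor.total {a b : Fin n} (ha : IsAncestor α a j) (hb : IsAncestor α b j) :
    IsAncestor α a b ∨ IsAncestor α b a :=
  (Relation.ReflTransGen.total_of_right_unique (fun _ _ _ h h' => h.2.symm.trans h'.2) ha hb).symm

theorem isAncestor_iff_of_ne_zero (hj : (j : ℕ) ≠ 0) :
    IsAncestor α k j ↔ j = k ∨ IsAncestor α k (α j) := by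
  simp [IsAncestor, Relation.ReflTransGen.cases_head_iff (a := j), hj, eq_comm]

theorem IsParentMap.le_of_isAncestor (hα : IsParentMap α) (h : IsAncestor α k j) : k ≤ j := by
  induction h with
  | refl => rfl
  | tail _ hstep ih => exact (hstep.2 ▸ hα _ hstep.1).le.trans ih

theorem IsParentMap.not_isAncestor_parent (hα : IsParentMap α) (hk : (k : ℕ) ≠ 0) :
    ¬IsAncestor α k (α k) :=
  fun h => (hα k hk).not_ge (hα.le_of_isAncestor h)

open scoped Classical in
/-- For `k ≠ 0`, the coordinates with respect to the generators of `treeCone α`. -/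
def subtreeSum (α : Fin n → Fin n) (k : Fin n) : (Fin n → ℝ) →ₗ[ℝ] ℝ :=
  ∑ j ∈ univ.filter (IsAncestor α k), LinearMap.proj j

open scoped Classical in
theorem subtreeSum_apply (x : Fin n → ℝ) :
    subtreeSum α k x = ∑ j ∈ univ.filter (IsAncestor α k), x j := by
  simp [subtreeSum]

open scoped Classical in
theorem subtreeSum_eVec : subtreeSum α k (eVec n j) = if IsAncestor α k j then 1 else 0 := by
  simp [subtreeSum_apply, eVec, Pi.single_apply]

open scoped Classical in
theorem subtreeSum_generator :
    subtreeSum β k (generator α j) =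
      (if IsAncestor β k j then 1 else 0) - (if IsAncestor β k (α j) then 1 else 0) := by
  rw [generator, map_sub, subtreeSum_eVec, subtreeSum_eVec]

theorem subtreeSum_generator_self (hα : IsParentMap α) (hj : j ∈ nonroot n) :
    subtreeSum α k (generator α j) = if j = k then 1 else 0 := by
  classical
  have hj0 : (j : ℕ) ≠ 0 := (mem_filter.1 hj).2
  rw [subtreeSum_generator, isAncestor_iff_of_ne_zero hj0]
  by_cases hjk : j = k
  · subst hjk
    simp [hα.not_isAncestor_parent hj0]
  · simp [hjk]

theorem subtreeSum_sum_smul_generator (hα : IsParentMap α) (hk : k ∈ nonroot n)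
    (c : Fin n → ℝ) : subtreeSum α k (∑ j ∈ nonroot n, c j • generator α j) = c k := by
  rw [map_sum, Finset.sum_congr rfl fun j hj => by
    rw [map_smul, subtreeSum_generator_self hα hj, smul_eq_mul, mul_ite, mul_one, mul_zero]]
  simp [hk]

theorem sum_sum_smul_generator (α : Fin n → Fin n) (c : Fin n → ℝ) :
    ∑ i, (∑ j ∈ nonroot n, c j • generator α j) i = 0 := by
  simp only [Finset.sum_apply, Pi.smul_apply, smul_eq_mul]
  rw [Finset.sum_comm]
  refine Finset.sum_eq_zero fun j _ => ?_
  simp [← Finset.mul_sum, generator, eVec, Finset.sum_sub_distrib]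

/-- Triangularity: `IsAncestor α k j` forces `k ≤ j`, so the largest index of a nonzero
coordinate of `x` is read off by the subtree sum at that index (or by the total sum at the
root). -/
theorem eq_zero_of_subtreeSum_eq_zero (hα : IsParentMap α) {x : Fin n → ℝ}
    (hx : ∑ i, x i = 0) (h : ∀ k ∈ nonroot n, subtreeSum α k x = 0) : x = 0 := by
  classical
  by_contra hne
  obtain ⟨j, hj, hmax⟩ := (univ.filter (x · ≠ 0)).exists_max_image id
    (by simpa [Finset.Nonempty, funext_iff] using hne)
  have hsingle : ∀ s : Finset (Fin n), j ∈ s → (∀ i ∈ s, j ≤ i) → ∑ i ∈ s, x i = x j :=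
    fun s hjs hs => Finset.sum_eq_single_of_mem j hjs fun i his hij => by
      by_contra hi
      exact hij (le_antisymm (hmax i (by simpa using hi)) (hs i his))
  rw [mem_filter] at hj
  by_cases hj0 : (j : ℕ) = 0
  · refine hj.2 ?_
    rw [← hsingle univ (mem_univ j) fun i _ => Fin.le_def.2 (hj0 ▸ Nat.zero_le _), hx]
  · refine hj.2 ?_
    rw [← hsingle _ (mem_filter.2 ⟨mem_univ j, IsAncestor.refl α j⟩)
      fun i hi => hα.le_of_isAncestor (mem_filter.1 hi).2, ← subtreeSum_apply]
    exact h j (mem_filter.2 ⟨mem_univ j, hj0⟩)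

theorem eq_sum_subtreeSum_smul_generator (hα : IsParentMap α) {x : Fin n → ℝ}
    (hx : ∑ i, x i = 0) : x = ∑ k ∈ nonroot n, subtreeSum α k x • generator α k := by
  refine sub_eq_zero.1 (eq_zero_of_subtreeSum_eq_zero hα ?_ fun k hk => ?_)
  · simp only [Pi.sub_apply, Finset.sum_sub_distrib, hx, sum_sum_smul_generator, sub_zero]
  · rw [map_sub, subtreeSum_sum_smul_generator hα hk, sub_self]

theorem mem_treeCone_iff (hα : IsParentMap α) {x : Fin n → ℝ} :
    x ∈ treeCone α ↔ ∑ i, x i = 0 ∧ ∀ k ∈ nonroot n, 0 ≤ subtreeSum α k x := by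
  constructor
  · rintro ⟨c, hc, rfl⟩
    exact ⟨sum_sum_smul_generator α c, fun k hk => by
      rw [subtreeSum_sum_smul_generator hα hk]; exact hc k⟩
  · rintro ⟨hx, hpos⟩
    refine ⟨fun k => max (subtreeSum α k x) 0, fun k => le_max_right _ _, ?_⟩
    exact (eq_sum_subtreeSum_smul_generator hα hx).trans
      (Finset.sum_congr rfl fun k hk => by simp [max_eq_left (hpos k hk)])

theorem isClosed_treeCone (hα : IsParentMap α) : IsClosed (treeCone α) := by
  have : treeCone α = {x | ∑ i, x i = 0} ∩ ⋂ k ∈ nonroot n, {x | 0 ≤ subtreeSum α k x} := by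
    ext x
    simp [mem_treeCone_iff hα]
  rw [this]
  exact (isClosed_eq (by fun_prop) continuous_const).inter <| isClosed_biInter fun k _ =>
    isClosed_le continuous_const (subtreeSum α k).continuous_of_finiteDimensional

theorem smul_mem_treeCone {t : ℝ} (ht : 0 ≤ t) {x : Fin n → ℝ} (hx : x ∈ treeCone α) :
    t • x ∈ treeCone α := by
  obtain ⟨c, hc, rfl⟩ := hx
  exact ⟨t • c, fun j => mul_nonneg ht (hc j), by simp [Finset.smul_sum, smul_smul]⟩

/-- A linear functional that is positive on every generator `eⱼ - e_{αⱼ}` of every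
`treeCone α` at once. -/
def weight : (Fin n → ℝ) →ₗ[ℝ] ℝ := ∑ i : Fin n, ((i : ℕ) : ℝ) • LinearMap.proj i

theorem weight_generator : weight (generator α j) = (j : ℕ) - (α j : ℕ) := by
  simp [weight, generator, eVec, Pi.single_apply, mul_sub, Finset.sum_sub_distrib]

theorem weight_pos_of_mem_treeCone (hα : IsParentMap α) {x : Fin n → ℝ}
    (hx : x ∈ treeCone α) (hx0 : x ≠ 0) : 0 < weight x := by
  obtain ⟨c, hc, rfl⟩ := hx
  have hgen : ∀ j ∈ nonroot n, (0 : ℝ) < (j : ℕ) - (α j : ℕ) := fun j hj =>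
    sub_pos.2 (Nat.cast_lt.2 (hα j (mem_filter.1 hj).2))
  simp only [map_sum, map_smul, weight_generator, smul_eq_mul]
  refine Finset.sum_pos' (fun j hj => mul_nonneg (hc j) (hgen j hj).le) ?_
  by_contra! hle
  refine hx0 (Finset.sum_eq_zero fun j hj => ?_)
  rw [le_antisymm (nonpos_of_mul_nonpos_left (hle j hj) (hgen j hj)) (hc j), zero_smul]

theorem treeCone_subset_of_isAncestor (hβ : IsParentMap β)
    (h : ∀ j ∈ nonroot n, (α j : ℕ) ≠ 0 → IsAncestor β (α j) j) :
    treeCone α ⊆ treeCone β := by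
  rintro _ ⟨c, hc, rfl⟩
  refine (mem_treeCone_iff hβ).2 ⟨sum_sum_smul_generator α c, fun k hk => ?_⟩
  simp only [map_sum, map_smul, subtreeSum_generator, smul_eq_mul]
  refine Finset.sum_nonneg fun j hj => mul_nonneg (hc j) ?_
  by_cases hkα : IsAncestor β k (α j)
  · have hα0 : (α j : ℕ) ≠ 0 := fun h0 =>
      (mem_filter.1 hk).2 (Nat.le_zero.1 (h0 ▸ hβ.le_of_isAncestor hkα))
    simp [hkα, hkα.trans (h j hj hα0)]
  · split_ifs <;> norm_num

theorem sum_pow_lt_pow_of_injOn {ι : Type*} {s : Finset ι} {b N : ℕ} {e : ι → ℕ} (hb : 2 ≤ b)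
    (he : Set.InjOn e s) (hlt : ∀ i ∈ s, e i < N) : ∑ i ∈ s, b ^ e i < b ^ N := by
  rw [← Finset.sum_image he]
  exact Nat.geomSum_lt hb (by simpa using hlt)

def lexRank (α : Fin n → Fin n) (j : Fin n) : ℕ := n * α j + j

theorem lexRank_injective (α : Fin n → Fin n) : Function.Injective (lexRank α) :=
  fun j j' h => Fin.ext <| by
    simpa [lexRank, Nat.mul_add_mod, Nat.mod_eq_of_lt] using congrArg (· % n) h

theorem lexRank_lt_of_lt {j j' : Fin n} (h : α j < α j') : lexRank α j < lexRank α j' := by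
  have h1 : n * ((α j : ℕ) + 1) ≤ n * α j' := Nat.mul_le_mul_left n h
  have := j.isLt
  rw [Nat.mul_succ] at h1
  simp only [lexRank]
  omega

/-- Each weight `(n + 1) ^ lexRank α j` exceeds the sum of any set of weights of smaller rank. -/
def separatingPoint (α : Fin n → Fin n) : Fin n → ℝ :=
  ∑ j ∈ nonroot n, (((n + 1) ^ lexRank α j : ℕ) : ℝ) • generator α j

theorem subtreeSum_separatingPoint_pos (hα : IsParentMap α) (hk : k ∈ nonroot n) :
    0 < subtreeSum α k (separatingPoint α) := by
  rw [separatingPoint, subtreeSum_sum_smul_generator hα hk]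
  positivity

theorem lexRank_lt_of_isAncestor (hβ : IsParentMap β) {j js : Fin n} (hjs0 : (α js : ℕ) ≠ 0)
    (hmax : ∀ i ∈ nonroot n, (α i : ℕ) ≠ 0 → ¬IsAncestor β (α i) i → lexRank α i ≤ lexRank α js)
    (hj : j ∈ nonroot n) (hne : j ≠ js) (hin : IsAncestor β (α js) j)
    (hout : ¬IsAncestor β (α js) (α j)) : lexRank α j < lexRank α js := by
  by_cases hαj0 : (α j : ℕ) = 0
  · have : n ≤ n * α js := Nat.le_mul_of_pos_right n (Nat.pos_of_ne_zero hjs0)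
    have := j.isLt
    simp only [lexRank, hαj0]
    omega
  by_cases hjβ : IsAncestor β (α j) j
  · rcases hin.total hjβ with h | h
    · exact absurd h hout
    · exact lexRank_lt_of_lt <| lt_of_le_of_ne (hβ.le_of_isAncestor h) fun h' =>
        hout (h' ▸ IsAncestor.refl β _)
  · exact lt_of_le_of_ne (hmax j hj hαj0 hjβ) ((lexRank_injective α).ne hne)

/-- If some `α j` is not a `β`-ancestor of `j`, take such a `js` of largest rank: in the subtree
sum at `α js`, the coefficient `-(n + 1) ^ lexRank α js` of `js` outweighs the positive ones,
which all have smaller rank. -/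
theorem isAncestor_of_separatingPoint_mem (hβ : IsParentMap β)
    (hu : separatingPoint α ∈ treeCone β) :
    ∀ j ∈ nonroot n, (α j : ℕ) ≠ 0 → IsAncestor β (α j) j := by
  classical
  set c : Fin n → ℝ := fun j => (((n + 1) ^ lexRank α j : ℕ) : ℝ)
  by_contra! hV
  set V := (nonroot n).filter fun j => (α j : ℕ) ≠ 0 ∧ ¬IsAncestor β (α j) j
  obtain ⟨js, hjsV, hmax⟩ := V.exists_max_image (lexRank α) <|
    let ⟨j, hj, h⟩ := hV; ⟨j, mem_filter.2 ⟨hj, h⟩⟩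
  obtain ⟨hjs, hjs0, hjsβ⟩ := mem_filter.1 hjsV
  set k := α js
  have hk : k ∈ nonroot n := mem_filter.2 ⟨mem_univ _, hjs0⟩
  set Q := ((nonroot n).erase js).filter fun j => IsAncestor β k j ∧ ¬IsAncestor β k (α j)
  have hQ : ∀ j ∈ Q, lexRank α j < lexRank α js := fun j hj => by
    obtain ⟨⟨hne, hjJ⟩, hin, hout⟩ := by simpa only [Q, mem_filter, mem_erase] using hj
    exact lexRank_lt_of_isAncestor hβ hjs0
      (fun i hi h0 hnot => hmax i (mem_filter.2 ⟨hi, h0, hnot⟩)) hjJ hne hin hout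
  have hcoef : subtreeSum β k (separatingPoint α) ≤ ∑ j ∈ Q, c j - c js := by
    simp only [separatingPoint, map_sum, map_smul, subtreeSum_generator, smul_eq_mul]
    rw [← Finset.add_sum_erase _ _ hjs, Finset.sum_filter, if_neg hjsβ,
      if_pos (IsAncestor.refl β k)]
    have hterm : ∀ j ∈ (nonroot n).erase js,
        c j * ((if IsAncestor β k j then 1 else 0) - (if IsAncestor β k (α j) then 1 else 0))
          ≤ if IsAncestor β k j ∧ ¬IsAncestor β k (α j) then c j else 0 := fun j _ => by
      split_ifs <;> simp_all [c]
      positivity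
    linarith [Finset.sum_le_sum hterm]
  have hgeom : ∑ j ∈ Q, c j < c js := by
    have := sum_pow_lt_pow_of_injOn (b := n + 1) (by have := js.pos; omega)
      (lexRank_injective α).injOn hQ
    simp only [c]
    exact_mod_cast this
  linarith [((mem_treeCone_iff hβ).1 hu).2 k hk]

theorem treeCone_subset_of_smul_separatingPoint_mem (hβ : IsParentMap β) {t : ℝ} (ht : 0 < t)
    (hu : t • separatingPoint α ∈ treeCone β) : treeCone α ⊆ treeCone β := by
  refine treeCone_subset_of_isAncestor hβ (isAncestor_of_separatingPoint_mem hβ ?_)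
  simpa [inv_smul_smul₀ ht.ne'] using smul_mem_treeCone (inv_nonneg.2 ht.le) hu

theorem eventually_add_smul_sub_notMem_treeCone (hβ : IsParentMap β) {x w : Fin n → ℝ}
    (hne : x ≠ w) (hle : weight x ≤ weight w) (u : Fin n → ℝ) :
    ∀ᶠ t in 𝓝 (0 : ℝ), x + t • u - w ∉ treeCone β := by
  have hxw : x - w ∉ treeCone β := fun hmem =>
    (weight_pos_of_mem_treeCone hβ hmem (sub_ne_zero.2 hne)).not_ge (by rwa [map_sub, sub_nonpos])
  have hcont : Continuous fun t : ℝ => x + t • u - w := by fun_prop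
  exact (hcont.tendsto' 0 (x - w) (by simp)).eventually
    ((isClosed_treeCone hβ).isOpen_compl.mem_nhds hxw)

/-- Take an apex `v ls` of minimal weight and, among the cones with that apex, a maximal one:
moving from `v ls` in the direction of `separatingPoint (β ls)` leaves every other translate. -/
theorem exists_eventually_notMem_treeCone {ι : Type*} [DecidableEq ι] {S : Finset ι}
    (hS : S.Nonempty) {v : ι → Fin n → ℝ} {β : ι → Fin n → Fin n} (hβ : ∀ l, IsParentMap (β l))
    (hinj : Set.InjOn (fun l => (v l, treeCone (β l))) S) :
    ∃ ls ∈ S, ∀ l ∈ S.erase ls,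
      ∀ᶠ t in 𝓝[>] (0 : ℝ), v ls + t • separatingPoint (β ls) - v l ∉ treeCone (β l) := by
  classical
  obtain ⟨l₀, hl₀, hmin⟩ := S.exists_min_image (fun l => weight (v l)) hS
  obtain ⟨ls, hls, hmax⟩ := (S.filter (v · = v l₀)).exists_maximalFor
    (fun l => treeCone (β l)) ⟨l₀, mem_filter.2 ⟨hl₀, rfl⟩⟩
  obtain ⟨hlsS, hvls⟩ := mem_filter.1 hls
  refine ⟨ls, hlsS, fun l hl => ?_⟩
  obtain ⟨hne, hlS⟩ := mem_erase.1 hl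
  by_cases hvl : v l = v ls
  · filter_upwards [self_mem_nhdsWithin] with t ht hmem
    rw [hvl, add_sub_cancel_left] at hmem
    have hsub := treeCone_subset_of_smul_separatingPoint_mem (hβ l) ht hmem
    exact hne (hinj hlS hlsS (Prod.ext hvl
      (le_antisymm (hmax (mem_filter.2 ⟨hlS, hvl.trans hvls⟩) hsub) hsub)))
  · exact nhdsWithin_le_nhds <| eventually_add_smul_sub_notMem_treeCone (hβ l) (Ne.symm hvl)
      (hvls ▸ hmin l hlS) _

theorem exists_isOpen_sub_mem_treeCone_iff {ι : Type*} [DecidableEq ι] {S : Finset ι}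
    (hS : S.Nonempty) {d : ℝ} {v : ι → Fin n → ℝ} {β : ι → Fin n → Fin n} (hv : ∀ l ∈ S, ∑ i, v l i = d)
    (hβ : ∀ l, IsParentMap (β l)) (hinj : Set.InjOn (fun l => (v l, treeCone (β l))) S) :
    ∃ ls ∈ S, ∃ O : Set (Fin n → ℝ), IsOpen O ∧ (∃ x ∈ O, ∑ i, x i = d) ∧
      ∀ y ∈ O, ∑ i, y i = d → ∀ l ∈ S, (y - v l ∈ treeCone (β l) ↔ l = ls) := by
  obtain ⟨ls, hlsS, houtside⟩ := exists_eventually_notMem_treeCone hS hβ hinj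
  set u := separatingPoint (β ls)
  set O := (⋂ k ∈ nonroot n, {y | 0 < subtreeSum (β ls) k (y - v ls)}) ∩
    ⋂ l ∈ S.erase ls, {y | y - v l ∉ treeCone (β l)}
  have hO : IsOpen O := by
    refine (isOpen_biInter_finset fun k _ => isOpen_lt continuous_const ?_).inter
      (isOpen_biInter_finset fun l _ => (isClosed_treeCone (hβ l)).isOpen_compl.preimage ?_)
    · exact (subtreeSum (β ls) k).continuous_of_finiteDimensional.comp (by fun_prop)
    · fun_prop
  have hinside : ∀ᶠ t in 𝓝[>] (0 : ℝ), ∀ k ∈ nonroot n, 0 < subtreeSum (β ls) k (t • u) := by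
    filter_upwards [self_mem_nhdsWithin] with t ht k hk
    rw [map_smul, smul_eq_mul]
    exact mul_pos ht (subtreeSum_separatingPoint_pos (hβ ls) hk)
  obtain ⟨t, htin, htout⟩ := (hinside.and ((S.erase ls).eventually_all.2 houtside)).exists
  refine ⟨ls, hlsS, O, hO, ⟨v ls + t • u, ⟨?_, ?_⟩, ?_⟩, ?_⟩
  · simpa using htin
  · simpa using htout
  · simp only [Pi.add_apply, Pi.smul_apply, smul_eq_mul, Finset.sum_add_distrib,
      ← Finset.mul_sum, hv ls hlsS, u, separatingPoint, sum_sum_smul_generator, mul_zero, add_zero]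
  · rintro y ⟨hyin, hyout⟩ hy l hl
    refine ⟨fun hmem => by_contra fun hne => ?_, ?_⟩
    · exact Set.mem_iInter₂.1 hyout l (mem_erase.2 ⟨hne, hl⟩) hmem
    · rintro rfl
      refine (mem_treeCone_iff (hβ l)).2 ⟨?_, fun k hk => (Set.mem_iInter₂.1 hyin k hk).le⟩
      simp [Finset.sum_sub_distrib, hy, hv l hl]

theorem sum_mul_indicator_eq {ι X : Type*} [Fintype ι] (a : ι → ℤ) (s : ι → Set X) {x : X}
    {i₀ : ι} (h : ∀ i, a i ≠ 0 → (x ∈ s i ↔ i = i₀)) (h₀ : a i₀ ≠ 0) :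
    ∑ i, a i * (s i).indicator (fun _ => (1 : ℤ)) x = a i₀ := by
  rw [Finset.sum_eq_single i₀ (fun i _ hi => ?_) (by simp),
    Set.indicator_of_mem ((h i₀ h₀).2 rfl), mul_one]
  by_cases hai : a i = 0
  · rw [hai, zero_mul]
  · rw [Set.indicator_of_notMem (mt (h i hai).1 hi), mul_zero]

end MatroidalCone

open MatroidalCone

theorem strictlyPositiveCone_indicators_independent_general {n : ℕ} (d : ℝ)
    {m : ℕ} (v : Fin m → (Fin n → ℝ)) (C : Fin m → Set (Fin n → ℝ)) (a : Fin m → ℤ)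
    (hv : ∀ l, ∑ i, v l i = d)
    (hC : ∀ l, IsStrictlyPositiveMatroidalCone (C l))
    (hdistinct : Function.Injective fun l => (v l, C l))
    (hsupp : interior {x : {y : Fin n → ℝ // ∑ i, y i = d} |
      (∑ l, a l * ((fun w => v l + w) '' C l).indicator (fun _ => (1 : ℤ)) (x : Fin n → ℝ))
        ≠ 0} = ∅) :
    ∀ l, a l = 0 := by
  choose β hβ hCβ using fun l => isStrictlyPositiveMatroidalCone_iff.1 (hC l)
  obtain rfl : C = fun l => treeCone (β l) := funext hCβ
  by_contra! ⟨l₁, hl₁⟩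
  obtain ⟨ls, hls, O, hO, ⟨x₀, hx₀O, hx₀⟩, hiso⟩ :=
    exists_isOpen_sub_mem_treeCone_iff (S := Finset.univ.filter (a · ≠ 0))
      ⟨l₁, by simpa using hl₁⟩ (fun l _ => hv l) hβ hdistinct.injOn
  have hals : a ls ≠ 0 := (Finset.mem_filter.1 hls).2
  refine Set.eq_empty_iff_forall_notMem.1 hsupp ⟨x₀, hx₀⟩ <|
    mem_interior.2 ⟨Subtype.val ⁻¹' O, fun y hy => ?_, hO.preimage continuous_subtype_val, hx₀O⟩
  rw [Set.mem_ofPred_eq, sum_mul_indicator_eq a _ (fun l hl => ?_) hals]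
  · exact hals
  · simpa [Set.image_add_left, neg_add_eq_sub] using hiso y hy y.2 l (by simpa using hl)

/-- Translates of strictly positive matroidal cones satisfy no nontrivial additive
relations: if the support of `∑ aₗ·1_{vₗ + Cₗ}` has empty interior in the hyperplane
`H = {∑ xᵢ = d}`, then all `aₗ` vanish. -/
theorem strictlyPositiveCone_indicators_independent {n : ℕ} (hn : 0 < n) (d : ℝ)
    {m : ℕ} (v : Fin m → (Fin n → ℝ)) (C : Fin m → Set (Fin n → ℝ)) (a : Fin m → ℤ)
    (hv : ∀ l, ∑ i, v l i = d)
    (hC : ∀ l, IsStrictlyPositiveMatroidalCone (C l))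
    (hdistinct : Function.Injective fun l => (v l, C l))
    (hsupp : interior {x : {y : Fin n → ℝ // ∑ i, y i = d} |
      (∑ l, a l * ((fun w => v l + w) '' C l).indicator (fun _ => (1 : ℤ)) (x : Fin n → ℝ))
        ≠ 0} = ∅) :
    ∀ l, a l = 0 :=
  strictlyPositiveCone_indicators_independent_general d v C a hv hC hdistinct hsupp
end
end

section
/- Let K be an infinite field, let n ≥ 1 and k ≥ 0 be integers, and let p ∈ K[x₁,…,xₙ,y₁,…,yₙ] be a polynomial of total degree at most k. If p(z₁,…,zₙ,z₁^{k+1},…,zₙ^{k+1}) = 0 for all z₁,…,zₙ ∈ K, then p = 0. -/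
/-!
Substituting `yᵢ ↦ xᵢ^(k+1)` turns `p` into a polynomial in the `xᵢ` that vanishes on all of `Kⁿ`,
hence is zero because `K` is infinite. As every exponent of `p` is at most `k`, the substitution
sends distinct monomials `x^a y^b` to distinct monomials `x^(a + (k+1) b)` (read `a` and `b` off as
base-`(k+1)` digits), so no cancellation can occur and `p` itself is zero.
-/

open Finsupp

theorem Nat.eq_and_eq_of_add_mul_eq_add_mul {a a' b b' d : ℕ} (ha : a < d) (ha' : a' < d)
    (h : a + d * b = a' + d * b') : a = a' ∧ b = b' := by
  constructor
  · simpa [Nat.mod_eq_of_lt ha, Nat.mod_eq_of_lt ha'] using congrArg (· % d) h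
  · simpa [Nat.add_mul_div_left _ _ (Nat.zero_lt_of_lt ha), Nat.div_eq_of_lt ha,
      Nat.div_eq_of_lt ha'] using congrArg (· / d) h

namespace MvPolynomial

variable {σ R : Type*} [CommSemiring R]

noncomputable def powSubst (d : ℕ) : MvPolynomial (σ ⊕ σ) R →ₐ[R] MvPolynomial σ R :=
  aeval (Sum.elim X fun i => X i ^ d)

noncomputable def powSubstExponent (d : ℕ) (m : σ ⊕ σ →₀ ℕ) : σ →₀ ℕ :=
  m.comapDomain Sum.inl Sum.inl_injective.injOn + d • m.comapDomain Sum.inr Sum.inr_injective.injOn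

@[simp]
theorem powSubstExponent_apply (d : ℕ) (m : σ ⊕ σ →₀ ℕ) (i : σ) :
    powSubstExponent d m i = m (.inl i) + d * m (.inr i) := by
  simp [powSubstExponent]

theorem powSubstExponent_injOn (d : ℕ) :
    Set.InjOn (powSubstExponent (σ := σ) d) {m | ∀ i, m (.inl i) < d} := by
  intro m hm m' hm' h
  have hdigits (i : σ) := Nat.eq_and_eq_of_add_mul_eq_add_mul (hm i) (hm' i) (by
    simpa using DFunLike.congr_fun h i)
  ext (i | i)
  exacts [(hdigits i).1, (hdigits i).2]

theorem powSubst_monomial (d : ℕ) (m : σ ⊕ σ →₀ ℕ) (c : R) :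
    powSubst d (monomial m c) = monomial (powSubstExponent d m) c := by
  rw [powSubst, aeval_monomial, ← comapDomain_sumElim_comapDomain m, prod_sumElim,
    powSubstExponent, comapDomain_inl_sumElim, comapDomain_inr_sumElim, ← mul_one c,
    ← monomial_mul, ← one_pow d, ← monomial_pow, monomial_eq, monomial_eq, C_1, one_mul,
    algebraMap_eq, mul_assoc]
  simp [Finsupp.prod, ← Finset.prod_pow, ← pow_mul, mul_comm]

theorem eval_powSubst (d : ℕ) (z : σ → R) (p : MvPolynomial (σ ⊕ σ) R) :
    eval z (powSubst d p) = eval (Sum.elim z fun i => z i ^ d) p := by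
  rw [powSubst, aeval_eq_bind₁, eval, eval₂Hom_bind₁]
  congr
  ext (i | i) <;> simp

variable {d : ℕ} {p : MvPolynomial (σ ⊕ σ) R}

theorem coeff_powSubst_powSubstExponent (hp : ∀ m ∈ p.support, ∀ i, m (.inl i) < d)
    {m : σ ⊕ σ →₀ ℕ} (hm : ∀ i, m (.inl i) < d) :
    coeff (powSubstExponent d m) (powSubst d p) = coeff m p := by
  classical
  calc coeff (powSubstExponent d m) (powSubst d p)
      = ∑ m' ∈ p.support, if m' = m then coeff m' p else 0 := by
        conv_lhs => rw [p.as_sum]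
        rw [map_sum, coeff_sum]
        refine Finset.sum_congr rfl fun m' hm' => ?_
        rw [powSubst_monomial, coeff_monomial]
        exact if_congr ((powSubstExponent_injOn d).eq_iff (hp m' hm') hm) rfl rfl
    _ = coeff m p := by
        simpa using Eq.symm

theorem eq_zero_of_powSubst_eq_zero (hp : ∀ m ∈ p.support, ∀ i, m (.inl i) < d)
    (h : powSubst d p = 0) : p = 0 := by
  ext m
  by_cases hm : m ∈ p.support
  · rw [← coeff_powSubst_powSubstExponent hp (hp m hm), h, coeff_zero, coeff_zero]
  · simpa using hm

end MvPolynomial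

open MvPolynomial

theorem eq_zero_of_vanishes_on_power_graph_general {K : Type*} [Field K] [Infinite K]
    {n k : ℕ}
    (p : MvPolynomial (Fin n ⊕ Fin n) K) (hdeg : p.totalDegree ≤ k)
    (hvanish : ∀ z : Fin n → K,
      MvPolynomial.eval (Sum.elim z fun i => z i ^ (k + 1)) p = 0) :
    p = 0 := by
  have hexponents : ∀ m ∈ p.support, ∀ i, m (.inl i) < k + 1 := fun m hm i =>
    Nat.lt_succ_of_le <|
      (le_degreeOf_of_mem_support _ hm).trans ((degreeOf_le_totalDegree p _).trans hdeg)
  refine eq_zero_of_powSubst_eq_zero hexponents (MvPolynomial.funext fun z => ?_)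
  rw [eval_powSubst, hvanish, map_zero]

/-- Over an infinite field, a polynomial `p(x₁,…,xₙ,y₁,…,yₙ)` of total degree at most `k`
vanishing at all points `(z₁,…,zₙ,z₁^{k+1},…,zₙ^{k+1})` is zero. -/
theorem eq_zero_of_vanishes_on_power_graph {K : Type*} [Field K] [Infinite K]
    {n k : ℕ} (hn : 1 ≤ n)
    (p : MvPolynomial (Fin n ⊕ Fin n) K) (hdeg : p.totalDegree ≤ k)
    (hvanish : ∀ z : Fin n → K,
      MvPolynomial.eval (Sum.elim z fun i => z i ^ (k + 1)) p = 0) :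
    p = 0 :=
  eq_zero_of_vanishes_on_power_graph_general p hdeg hvanish
end

section
/- Let d ≥ 3 be an integer and let L = ℚ(u,v) be the field of rational functions in two indeterminates u, v over ℚ. Set F(z) = (z+u)(z+v) ∈ L[z], G(z) = ∏_{k=0}^{d} (z + ku + (d−k)v) ∈ L[z], and P(z) = (G(z) − G(0))/z ∈ L[z]. Let Q ∈ L[H₁,…,H_d] be the unique polynomial of degree at most 1 in each variable Hᵢ that is congruent to P(H₁ + ⋯ + H_d) modulo the ideal generated by F(H₁), …, F(H_d), and let ℓ(z) = Q(z,z,…,z) ∈ L[z]. Write ℓ(z) = a₀(z) + a₁(z)·F(z) + a₂(z)·F(z)² + ⋯ with each aₘ ∈ L[z] of degree at most 1 (this expansion exists and is unique because F is monic of degree 2). Then the coefficient of z in a₁(z) equals d(d−1)(d−2)·∏_{k=2}^{d−2}(ku + (d−k)v), where the product is 1 when d = 3. -/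
/-!
On the grid `{-u, -v}ᵈ` every `F(Hᵢ)` vanishes, so there `Q` agrees with `P(H₁ + ⋯ + H_d)`.
As `Q` is multilinear, the values of its diagonal `ℓ` and of `ℓ'` at `-u` and `-v` are
differences of grid values: `ℓ(-u) = P(-du)` and `ℓ'(-u)(v - u) = d(P(-du) - P(-(d-1)u - v))`,
and symmetrically at `-v`. Reading `ℓ ≡ a₀ + a₁F (mod F²)` as Hermite interpolation at the
double roots `-u, -v` of `F²` expresses the linear coefficient of `a₁` through these four
numbers. Finally, at a root `-w` of `G` we have `P(-w) = G(0)/w`, and `G(0) = ∏ₖ (ku + (d-k)v)`;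
the four roots used (`k = 0, 1, d-1, d`) leave exactly the factor `∏_{k=2}^{d-2} (ku + (d-k)v)`.
-/

noncomputable section

/-- The field `L = ℚ(u,v)` of rational functions in two indeterminates over `ℚ`. -/
abbrev Lf : Type _ := FractionRing (MvPolynomial (Fin 2) ℚ)

/-- The indeterminate `u`. -/
def uu : Lf := algebraMap (MvPolynomial (Fin 2) ℚ) Lf (MvPolynomial.X 0)

/-- The indeterminate `v`. -/
def vv : Lf := algebraMap (MvPolynomial (Fin 2) ℚ) Lf (MvPolynomial.X 1)

open scoped Polynomial

theorem Finset.prod_range_succ_eq_mul_prod_Icc {M : Type*} [CommMonoid M] (f : ℕ → M) {d : ℕ}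
    (hd : 3 ≤ d) :
    ∏ k ∈ range (d + 1), f k = f 0 * f 1 * f (d - 1) * f d * ∏ k ∈ Icc 2 (d - 2), f k := by
  obtain ⟨n, rfl⟩ : ∃ n, d = n + 3 := ⟨d - 3, by omega⟩
  rw [prod_range_succ, prod_range_succ, prod_range_succ', prod_range_succ',
    show n + 3 - 2 = n + 1 by omega, ← Ico_add_one_right_eq_Icc, prod_Ico_eq_prod_range]
  simp only [show n + 1 + 1 - 2 = n by omega, show n + 3 - 1 = n + 2 by omega]
  simp only [add_comm 2, zero_add]
  ac_rfl

namespace Polynomial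

variable {R : Type*} [CommRing R]

theorem isRoot_and_isRoot_derivative_of_sq_dvd {F g : R[X]} {r : R} (hF : F.IsRoot r)
    (h : F ^ 2 ∣ g) : g.IsRoot r ∧ (derivative g).IsRoot r := by
  obtain ⟨c, rfl⟩ := h
  simp [hF.eq_zero, derivative_mul, derivative_pow]

theorem coeff_one_mul_cube_of_sq_dvd {u v : R} {ℓ a₀ a₁ : R[X]} (ha₀ : a₀.degree ≤ 1)
    (ha₁ : a₁.degree ≤ 1)
    (h : ((X + C u) * (X + C v)) ^ 2 ∣ ℓ - a₀ - a₁ * ((X + C u) * (X + C v))) :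
    a₁.coeff 1 * (v - u) ^ 3 =
      ((derivative ℓ).eval (-u) + (derivative ℓ).eval (-v)) * (v - u) -
        2 * (ℓ.eval (-u) - ℓ.eval (-v)) := by
  obtain ⟨hu, hu'⟩ := isRoot_and_isRoot_derivative_of_sq_dvd (r := -u) (by simp) h
  obtain ⟨hv, hv'⟩ := isRoot_and_isRoot_derivative_of_sq_dvd (r := -v) (by simp) h
  rw [eq_X_add_C_of_degree_le_one ha₀, eq_X_add_C_of_degree_le_one ha₁] at hu hu' hv hv'
  simp [derivative_mul] at hu hu' hv hv'
  linear_combination -(v - u) * (hu' + hv') + 2 * (hu - hv)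

theorem mul_eval_eq_neg_eval_zero {G P : R[X]} (hP : X * P = G - C (G.eval 0)) {r : R}
    (hr : G.IsRoot r) : r * P.eval r = -G.eval 0 := by
  simpa [hr.eq_zero] using congrArg (eval r) hP

end Polynomial

namespace MvPolynomial

variable {σ R : Type*} [CommRing R]

theorem eval_aeval_const_X (p : MvPolynomial σ R) (t : R) :
    (aeval (fun _ : σ => (Polynomial.X : R[X])) p).eval t = eval (fun _ => t) p := by
  simpa [coe_aeval_eq_eval, Polynomial.coe_aeval_eq_eval] using
    DFunLike.congr_fun (comp_aeval (R := R) (fun _ : σ => Polynomial.X) (Polynomial.aeval t)) p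

theorem eval_polynomial_aeval (c : σ → R) (q : MvPolynomial σ R) (P : R[X]) :
    eval c (Polynomial.aeval q P) = P.eval (eval c q) := by
  simpa [coe_aeval_eq_eval, Polynomial.coe_aeval_eq_eval] using
    (Polynomial.aeval_algHom_apply (aeval c) q P).symm

theorem eval_eq_eval_sum_of_sub_mem_span [Fintype σ] {F P : R[X]} {Q : MvPolynomial σ R}
    (hQ : Polynomial.aeval (∑ i, X i) P - Q ∈
      Ideal.span (Set.range fun i => Polynomial.aeval (X i) F))
    {c : σ → R} (hc : ∀ i, F.IsRoot (c i)) : eval c Q = P.eval (∑ i, c i) := by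
  have hker : Polynomial.aeval (∑ i, X i) P - Q ∈ RingHom.ker (eval c) := by
    refine Ideal.span_le.2 ?_ hQ
    rintro _ ⟨i, rfl⟩
    simpa [eval_polynomial_aeval] using hc i
  rw [RingHom.mem_ker, map_sub, sub_eq_zero, eval_polynomial_aeval] at hker
  simpa using hker.symm

theorem derivative_aeval_const_X [Fintype σ] (p : MvPolynomial σ R) :
    Polynomial.derivative (aeval (fun _ : σ => (Polynomial.X : R[X])) p) =
      ∑ i, aeval (fun _ => Polynomial.X) (pderiv i p) := by
  classical
  induction p using MvPolynomial.induction_on with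
  | C a => simp
  | add p q hp hq => simp [hp, hq, Finset.sum_add_distrib]
  | mul_X p i hp =>
    simp [Polynomial.derivative_mul, hp, Finset.sum_add_distrib, Finset.mul_sum, pderiv_X,
      Pi.single_apply, apply_ite, mul_comm]

theorem eval_update_sub_eval_update_monomial [Fintype σ] [DecidableEq σ] {m : σ →₀ ℕ}
    {i : σ} (hm : m i ≤ 1) (c : σ → R) (x y a : R) :
    eval (Function.update c i x) (monomial m a) - eval (Function.update c i y) (monomial m a) =
      (x - y) * eval c (pderiv i (monomial m a)) := by
  have hupdate : ∀ z, ∏ j ∈ {i}ᶜ, Function.update c i z j ^ m j = ∏ j ∈ {i}ᶜ, c j ^ m j :=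
    fun z => Finset.prod_congr rfl fun j hj => by rw [Function.update_of_ne (by simpa using hj)]
  have hsub :
      ∏ j ∈ {i}ᶜ, c j ^ (m - Finsupp.single i 1 : σ →₀ ℕ) j = ∏ j ∈ {i}ᶜ, c j ^ m j :=
    Finset.prod_congr rfl fun j hj => by simp [Ne.symm (by simpa using hj : j ≠ i)]
  simp only [pderiv_monomial, eval_monomial, Finsupp.prod_fintype _ _ (fun _ => pow_zero _),
    Fintype.prod_eq_mul_prod_compl i, hupdate, Function.update_self, hsub]
  obtain h | h : m i = 0 ∨ m i = 1 := by omega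
  · simp [h]
  · simp [h]
    ring

theorem eval_update_sub_eval_update [Fintype σ] [DecidableEq σ] {p : MvPolynomial σ R} {i : σ}
    (hp : degreeOf i p ≤ 1) (c : σ → R) (x y : R) :
    eval (Function.update c i x) p - eval (Function.update c i y) p =
      (x - y) * eval c (pderiv i p) := by
  conv_lhs => rw [p.as_sum]
  conv_rhs => rw [p.as_sum]
  simp only [map_sum, ← Finset.sum_sub_distrib, Finset.mul_sum]
  exact Finset.sum_congr rfl fun m hm =>
    eval_update_sub_eval_update_monomial (degreeOf_le_iff.1 hp m hm) c x y _

theorem eval_derivative_aeval_const_X_mul_sub [Fintype σ] [DecidableEq σ] {p : MvPolynomial σ R}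
    (hp : ∀ i, degreeOf i p ≤ 1) (a b : R) :
    (Polynomial.derivative (aeval (fun _ : σ => (Polynomial.X : R[X])) p)).eval a * (a - b) =
      ∑ i, (eval (fun _ => a) p - eval (Function.update (fun _ => a) i b) p) := by
  rw [derivative_aeval_const_X, Polynomial.eval_finsetSum, Finset.sum_mul]
  refine Finset.sum_congr rfl fun i _ => ?_
  have h := eval_update_sub_eval_update (hp i) (fun _ => a) a b
  rw [Function.update_eq_self] at h
  rw [h, eval_aeval_const_X, mul_comm]

theorem eval_derivative_aeval_const_X_mul_sub_of_eval_grid {n : ℕ} {P : R[X]}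
    {Q : MvPolynomial (Fin n) R} (hQ : ∀ i, degreeOf i Q ≤ 1) {a b : R}
    (hgrid : ∀ c : Fin n → R, (∀ i, c i = a ∨ c i = b) → eval c Q = P.eval (∑ i, c i)) :
    (Polynomial.derivative (aeval (fun _ => (Polynomial.X : R[X])) Q)).eval a * (a - b) =
      n * (P.eval (n * a) - P.eval ((n - 1) * a + b)) := by
  have hsum : ∀ i : Fin n, ∑ j, Function.update (fun _ => a) i b j = (n - 1) * a + b :=
    fun i => by
    have h := Finset.add_sum_erase Finset.univ (fun _ => a) (Finset.mem_univ i)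
    rw [Finset.sum_update_of_mem (Finset.mem_univ i), Finset.sdiff_singleton_eq_erase]
    simp only [Finset.sum_const, Finset.card_univ, Fintype.card_fin, nsmul_eq_mul] at h ⊢
    linear_combination h
  have hterm : ∀ i : Fin n, eval (fun _ => a) Q - eval (Function.update (fun _ => a) i b) Q =
      P.eval (n * a) - P.eval ((n - 1) * a + b) := fun i => by
    rw [hgrid _ fun _ => Or.inl rfl, hgrid _ fun j => ?_, hsum]
    · simp
    · rcases eq_or_ne j i with rfl | hj
      · simp
      · simp [hj]
  rw [eval_derivative_aeval_const_X_mul_sub hQ, Finset.sum_congr rfl fun i _ => hterm i,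
    Finset.sum_const, Finset.card_univ, Fintype.card_fin, nsmul_eq_mul]

theorem coeff_one_mul_cube_eq_of_sub_mem_span {n : ℕ} {u v : R} {F P a₀ a₁ : R[X]}
    (hF : F = (Polynomial.X + Polynomial.C u) * (Polynomial.X + Polynomial.C v))
    {Q : MvPolynomial (Fin n) R} (hQ : ∀ i, degreeOf i Q ≤ 1)
    (hQP : Polynomial.aeval (∑ i, X i) P - Q ∈
      Ideal.span (Set.range fun i => Polynomial.aeval (X i) F))
    (ha₀ : a₀.degree ≤ 1) (ha₁ : a₁.degree ≤ 1)
    (h : F ^ 2 ∣ aeval (fun _ => Polynomial.X) Q - a₀ - a₁ * F) :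
    a₁.coeff 1 * (v - u) ^ 3 =
      n * (P.eval (n * -u) - P.eval ((n - 1) * -u + -v)) -
        n * (P.eval (n * -v) - P.eval ((n - 1) * -v + -u)) -
        2 * (P.eval (n * -u) - P.eval (n * -v)) := by
  have hgrid :
      ∀ c : Fin n → R, (∀ i, c i = -u ∨ c i = -v) → eval c Q = P.eval (∑ i, c i) :=
    fun c hc => eval_eq_eval_sum_of_sub_mem_span hQP fun i => by
      rcases hc i with h | h <;> simp [h, hF]
  have hderiv_u := eval_derivative_aeval_const_X_mul_sub_of_eval_grid hQ hgrid
  have hderiv_v := eval_derivative_aeval_const_X_mul_sub_of_eval_grid hQ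
    (fun c hc => hgrid c fun i => (hc i).symm)
  have hcoeff := Polynomial.coeff_one_mul_cube_of_sq_dvd ha₀ ha₁ (hF ▸ h)
  rw [eval_aeval_const_X, eval_aeval_const_X, hgrid _ fun _ => Or.inl rfl,
    hgrid _ fun _ => Or.inr rfl] at hcoeff
  simp only [Finset.sum_const, Finset.card_univ, Fintype.card_fin, nsmul_eq_mul] at hcoeff
  linear_combination hcoeff + hderiv_u - hderiv_v

end MvPolynomial

theorem ratCast_mul_uu_add_ratCast_mul_vv_ne_zero {s t : ℚ} (h : s ≠ 0 ∨ t ≠ 0) :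
    (s : Lf) * uu + (t : Lf) * vv ≠ 0 := by
  intro h0
  have hpoly : (MvPolynomial.C s * MvPolynomial.X 0 + MvPolynomial.C t * MvPolynomial.X 1 :
      MvPolynomial (Fin 2) ℚ) = 0 := by
    apply IsFractionRing.injective (MvPolynomial (Fin 2) ℚ) Lf
    have hC (q : ℚ) : algebraMap _ Lf (MvPolynomial.C q : MvPolynomial (Fin 2) ℚ) = (q : Lf) := by
      rw [← MvPolynomial.algebraMap_eq, ← IsScalarTower.algebraMap_apply, eq_ratCast]
    rwa [map_add, map_mul, map_mul, hC, hC, map_zero]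
  have hs := congrArg (MvPolynomial.eval ![1, 0]) hpoly
  have ht := congrArg (MvPolynomial.eval ![0, 1]) hpoly
  simp at hs ht
  tauto

def middleWeightProd (d : ℕ) : Lf :=
  ∏ k ∈ Finset.Icc 2 (d - 2), ((k : Lf) * uu + ((d - k : ℕ) : Lf) * vv)

theorem eval_extreme_roots {d : ℕ} (hd : 3 ≤ d) {G P : Lf[X]}
    (hG : G = ∏ k ∈ Finset.range (d + 1),
      (Polynomial.X + Polynomial.C ((k : Lf) * uu + ((d - k : ℕ) : Lf) * vv)))
    (hP : Polynomial.X * P = G - Polynomial.C (G.eval 0)) :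
    P.eval (d * -uu) = d * vv * (uu + (d - 1) * vv) * ((d - 1) * uu + vv) * middleWeightProd d ∧
    P.eval (d * -vv) = (uu + (d - 1) * vv) * ((d - 1) * uu + vv) * (d * uu) * middleWeightProd d ∧
    P.eval ((d - 1) * -uu + -vv) = d * vv * (uu + (d - 1) * vv) * (d * uu) * middleWeightProd d ∧
    P.eval ((d - 1) * -vv + -uu) =
      d * vv * ((d - 1) * uu + vv) * (d * uu) * middleWeightProd d := by
  have hG0 : G.eval 0 =
      d * vv * (uu + (d - 1) * vv) * ((d - 1) * uu + vv) * (d * uu) * middleWeightProd d := by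
    rw [hG, Polynomial.eval_prod, Finset.prod_range_succ_eq_mul_prod_Icc _ hd, middleWeightProd]
    simp only [Polynomial.eval_add, Polynomial.eval_X, Polynomial.eval_C, zero_add, Nat.sub_zero,
      Nat.sub_self, show d - (d - 1) = 1 by omega, Nat.cast_sub (by omega : 1 ≤ d)]
    push_cast
    ring
  have hvalue :
      ∀ j ≤ d, ∀ r : Lf, r + (j * uu + (d - j) * vv) = 0 → r * P.eval r = -G.eval 0 := by
    intro j hj r hr
    refine Polynomial.mul_eval_eq_neg_eval_zero hP ?_
    rw [hG, Polynomial.IsRoot, Polynomial.eval_prod]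
    exact Finset.prod_eq_zero (i := j) (Finset.mem_range.2 (by omega))
      (by simpa [Nat.cast_sub hj] using hr)
  have hnz : ∀ (s t : ℚ) (x : Lf), s ≠ 0 ∨ t ≠ 0 → x = s * uu + t * vv → x ≠ 0 :=
    fun s t x hst hx => hx ▸ ratCast_mul_uu_add_ratCast_mul_vv_ne_zero hst
  have hd0 : (d : ℚ) ≠ 0 := by exact_mod_cast (by omega : d ≠ 0)
  refine ⟨mul_left_cancel₀ (hnz (-d) 0 (d * -uu) (by simpa using hd0) (by push_cast; ring)) ?_,
    mul_left_cancel₀ (hnz 0 (-d) (d * -vv) (by simpa using hd0) (by push_cast; ring)) ?_,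
    mul_left_cancel₀ (hnz (1 - d) (-1) ((d - 1) * -uu + -vv) (by simp) (by push_cast; ring)) ?_,
    mul_left_cancel₀ (hnz (-1) (1 - d) ((d - 1) * -vv + -uu) (by simp) (by push_cast; ring)) ?_⟩
  · rw [hvalue d le_rfl _ (by ring), hG0]; ring
  · rw [hvalue 0 (by omega) _ (by ring), hG0]; ring
  · rw [hvalue (d - 1) (by omega) _ (by push_cast [Nat.cast_sub (by omega : 1 ≤ d)]; ring), hG0]
    ring
  · rw [hvalue 1 (by omega) _ (by ring), hG0]; ring

/-- With `F(z) = (z+u)(z+v)`, `G(z) = ∏_{k=0}^d (z + ku + (d−k)v)`,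
`P(z) = (G(z) − G(0))/z`, `Q` the multilinear reduction of `P(H₁+⋯+H_d)` modulo
`F(H₁),…,F(H_d)`, and `ℓ(z) = Q(z,…,z) = a₀(z) + a₁(z)F(z) + a₂(z)F(z)² + ⋯` with each
`aₘ` of degree at most 1, the coefficient of `z` in `a₁` equals
`d(d−1)(d−2)·∏_{k=2}^{d−2}(ku + (d−k)v)`. -/
theorem fiber_class_coefficient (d : ℕ) (hd : 3 ≤ d)
    (F G P : Polynomial Lf)
    (hF : F = (Polynomial.X + Polynomial.C uu) * (Polynomial.X + Polynomial.C vv))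
    (hG : G = ∏ k ∈ Finset.range (d + 1),
      (Polynomial.X + Polynomial.C ((k : Lf) * uu + ((d - k : ℕ) : Lf) * vv)))
    (hP : Polynomial.X * P = G - Polynomial.C (G.eval 0))
    (Q : MvPolynomial (Fin d) Lf)
    (hQdeg : ∀ i : Fin d, Q.degreeOf i ≤ 1)
    (hQcong : Polynomial.aeval (∑ i : Fin d, MvPolynomial.X i) P - Q ∈
      Ideal.span (Set.range fun i : Fin d =>
        Polynomial.aeval (MvPolynomial.X i : MvPolynomial (Fin d) Lf) F))
    (ell : Polynomial Lf)
    (hell : ell = MvPolynomial.aeval (fun _ : Fin d => (Polynomial.X : Polynomial Lf)) Q)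
    (a₀ a₁ : Polynomial Lf) (ha₀ : a₀.degree ≤ 1) (ha₁ : a₁.degree ≤ 1)
    (hdecomp : F ^ 2 ∣ ell - a₀ - a₁ * F) :
    a₁.coeff 1 = (d : Lf) * ((d : Lf) - 1) * ((d : Lf) - 2) *
      ∏ k ∈ Finset.Icc 2 (d - 2), ((k : Lf) * uu + ((d - k : ℕ) : Lf) * vv) := by
  have hcoeff := MvPolynomial.coeff_one_mul_cube_eq_of_sub_mem_span hF hQdeg hQcong ha₀ ha₁
    (hell ▸ hdecomp)
  obtain ⟨hA, hB, hA1, hB1⟩ := eval_extreme_roots hd hG hP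
  rw [hA, hB, hA1, hB1] at hcoeff
  have hvu : vv - uu ≠ 0 := by
    simpa [sub_eq_neg_add] using
      ratCast_mul_uu_add_ratCast_mul_vv_ne_zero (s := -1) (t := 1) (by simp)
  refine mul_right_cancel₀ (pow_ne_zero 3 hvu) ?_
  rw [hcoeff, middleWeightProd]
  ring
end
end

section
/- Let R be a commutative ring and let F ∈ R[X] be a monic polynomial. In the polynomial ring R[z,a,b], let G_a and G_b be the unique polynomials satisfying (z−a)·G_a = F(z) − F(a) and (z−b)·G_b = F(z) − F(b). Then (a−b)·G_a·G_b = F(a)·G_b − F(b)·G_a + F(z)·(G_a − G_b). -/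
-- Write `a - b = (z - b) - (z - a)` and substitute the two defining equations.
theorem sub_mul_mul_eq_of_divided_differences {A : Type*} [CommRing A]
    {z a b fz fa fb ga gb : A} (ha : (z - a) * ga = fz - fa) (hb : (z - b) * gb = fz - fb) :
    (a - b) * ga * gb = fa * gb - fb * ga + fz * (ga - gb) := by
  linear_combination ga * hb - gb * ha

theorem partial_fraction_divided_difference_general {R : Type*} [CommRing R]
    (F : Polynomial R)
    (Ga Gb : MvPolynomial (Fin 3) R)
    (hGa : (MvPolynomial.X 0 - MvPolynomial.X 1) * Ga =
      Polynomial.aeval (MvPolynomial.X 0 : MvPolynomial (Fin 3) R) F -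
        Polynomial.aeval (MvPolynomial.X 1 : MvPolynomial (Fin 3) R) F)
    (hGb : (MvPolynomial.X 0 - MvPolynomial.X 2) * Gb =
      Polynomial.aeval (MvPolynomial.X 0 : MvPolynomial (Fin 3) R) F -
        Polynomial.aeval (MvPolynomial.X 2 : MvPolynomial (Fin 3) R) F) :
    (MvPolynomial.X 1 - MvPolynomial.X 2) * Ga * Gb =
      Polynomial.aeval (MvPolynomial.X 1 : MvPolynomial (Fin 3) R) F * Gb -
        Polynomial.aeval (MvPolynomial.X 2 : MvPolynomial (Fin 3) R) F * Ga +
        Polynomial.aeval (MvPolynomial.X 0 : MvPolynomial (Fin 3) R) F * (Ga - Gb) :=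
  sub_mul_mul_eq_of_divided_differences hGa hGb

/-- The partial fraction identity for divided differences: in `R[z,a,b]`, if
`(z−a)·G_a = F(z) − F(a)` and `(z−b)·G_b = F(z) − F(b)` for a monic `F ∈ R[X]`, then
`(a−b)·G_a·G_b = F(a)·G_b − F(b)·G_a + F(z)·(G_a − G_b)`. -/
theorem partial_fraction_divided_difference {R : Type*} [CommRing R]
    (F : Polynomial R) (hF : F.Monic)
    (Ga Gb : MvPolynomial (Fin 3) R)
    (hGa : (MvPolynomial.X 0 - MvPolynomial.X 1) * Ga =
      Polynomial.aeval (MvPolynomial.X 0 : MvPolynomial (Fin 3) R) F -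
        Polynomial.aeval (MvPolynomial.X 1 : MvPolynomial (Fin 3) R) F)
    (hGb : (MvPolynomial.X 0 - MvPolynomial.X 2) * Gb =
      Polynomial.aeval (MvPolynomial.X 0 : MvPolynomial (Fin 3) R) F -
        Polynomial.aeval (MvPolynomial.X 2 : MvPolynomial (Fin 3) R) F) :
    (MvPolynomial.X 1 - MvPolynomial.X 2) * Ga * Gb =
      Polynomial.aeval (MvPolynomial.X 1 : MvPolynomial (Fin 3) R) F * Gb -
        Polynomial.aeval (MvPolynomial.X 2 : MvPolynomial (Fin 3) R) F * Ga +
        Polynomial.aeval (MvPolynomial.X 0 : MvPolynomial (Fin 3) R) F * (Ga - Gb) :=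
  partial_fraction_divided_difference_general F Ga Gb hGa hGb
end
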